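/- arXiv:2505.23445 — 3 statements merged into one kernel-verified Lean document; each statement's English description precedes it below -/
import Mathlib

section
/- Let (G, ξ) be a centered bivariate Gaussian vector with covariance matrix [[a, c], [c, b]], a, b > 0, |c| < √(ab), and M = G + ξ. Then E[G | M > m] ~ ((a+c)/(a+b+2c)) · m as m → ∞. -/
open MeasureTheory ProbabilityTheory Filter Asymptotics Real Set
open scoped NNReal ENNReal

noncomputable def phiG (z : ℝ) : ℝ := Real.exp (-z^2/2) / Real.sqrt (2*Real.pi)

noncomputable def QG (u : ℝ) : ℝ := ∫ z in Set.Ioi u, phiG z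

lemma phiG_nonneg (z : ℝ) : 0 ≤ phiG z := by
  unfold phiG; positivity

lemma phiG_pos (z : ℝ) : 0 < phiG z := by
  unfold phiG
  have : 0 < Real.sqrt (2*Real.pi) := Real.sqrt_pos.2 (by positivity)
  positivity

lemma continuous_phiG : Continuous phiG := by
  unfold phiG; fun_prop

lemma integrable_phiG : Integrable phiG := by
  have h := (integrable_exp_neg_mul_sq (by norm_num : (0:ℝ) < 1/2)).div_const (Real.sqrt (2*Real.pi))
  refine h.congr (ae_of_all _ fun x => ?_)
  unfold phiG
  ring_nf

lemma integrable_mul_phiG : Integrable (fun z => z * phiG z) := by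
  have h := (integrable_mul_exp_neg_mul_sq (by norm_num : (0:ℝ) < 1/2)).div_const (Real.sqrt (2*Real.pi))
  refine h.congr (ae_of_all _ fun x => ?_)
  unfold phiG
  ring_nf

lemma hasDerivAt_phiG (z : ℝ) : HasDerivAt phiG (-z * phiG z) z := by
  have h1 : HasDerivAt (fun z : ℝ => -z^2/2) (-z) z := by
    have := ((hasDerivAt_pow 2 z).neg).div_const 2
    simpa using this.congr_deriv (by ring)
  have h2 : HasDerivAt (fun z : ℝ => Real.exp (-z^2/2)) (Real.exp (-z^2/2) * (-z)) z :=
    (Real.hasDerivAt_exp _).comp z h1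
  have h3 := h2.div_const (Real.sqrt (2*Real.pi))
  refine h3.congr_deriv ?_
  unfold phiG; ring

lemma tendsto_phiG_atTop : Tendsto phiG atTop (nhds 0) := by
  have h1 : Tendsto (fun z : ℝ => -z^2/2) atTop atBot := by
    apply Filter.Tendsto.atBot_div_const (by norm_num)
    exact tendsto_neg_atBot_iff.mpr (tendsto_pow_atTop (by norm_num : 2 ≠ 0))
  have h2 : Tendsto (fun z : ℝ => Real.exp (-z^2/2)) atTop (nhds 0) :=
    Real.tendsto_exp_atBot.comp h1
  have := h2.div_const (Real.sqrt (2*Real.pi))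
  rw [zero_div] at this
  exact this

lemma integral_Ioi_mul_phiG (u : ℝ) : ∫ z in Set.Ioi u, z * phiG z = phiG u := by
  have h := integral_Ioi_of_hasDerivAt_of_tendsto (f := fun z => -phiG z)
    (f' := fun z => z * phiG z) (a := u) (m := 0)
    (continuous_phiG.neg.continuousWithinAt)
    (fun x _ => by exact (hasDerivAt_phiG x).neg.congr_deriv (by ring))
    (integrable_mul_phiG.integrableOn)
    (by simpa using tendsto_phiG_atTop.neg)
  simpa using h

lemma QG_split {a b : ℝ} (hab : a ≤ b) : QG a = (∫ z in a..b, phiG z) + QG b := by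
  unfold QG
  rw [intervalIntegral.integral_of_le hab, ← setIntegral_union (Set.Ioc_disjoint_Ioi le_rfl)
    measurableSet_Ioi integrable_phiG.integrableOn integrable_phiG.integrableOn,
    Set.Ioc_union_Ioi_eq_Ioi hab]

lemma hasDerivAt_QG (u : ℝ) : HasDerivAt QG (-phiG u) u := by
  have key : ∀ x ∈ Set.Ioi (u-1), QG x = QG (u-1) - ∫ z in (u-1)..x, phiG z := by
    intro x hx
    rw [QG_split (le_of_lt hx)]
    ring
  have hder : HasDerivAt (fun x => QG (u-1) - ∫ z in (u-1)..x, phiG z) (-phiG u) u := by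
    have h := (continuous_phiG.integral_hasStrictDerivAt (u-1) u).hasDerivAt
    exact ((hasDerivAt_const u (QG (u-1))).sub h).congr_deriv (zero_sub _)
  refine hder.congr_of_eventuallyEq ?_
  filter_upwards [Ioi_mem_nhds (by linarith : u - 1 < u)] with x hx
  rw [key x hx]

lemma QG_nonneg (u : ℝ) : 0 ≤ QG u :=
  setIntegral_nonneg measurableSet_Ioi fun z _ => phiG_nonneg z

lemma QG_le (u : ℝ) (hu : 0 < u) : QG u ≤ phiG u / u := by
  have h : QG u ≤ (∫ z in Set.Ioi u, z * phiG z) / u := by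
    rw [div_eq_inv_mul, ← integral_const_mul]
    refine setIntegral_mono_on integrable_phiG.integrableOn
      (integrable_mul_phiG.integrableOn.const_mul _) measurableSet_Ioi ?_
    intro z hz
    have hz' : u < z := hz
    have : phiG z * 1 ≤ phiG z * (u⁻¹ * z) := by
      apply mul_le_mul_of_nonneg_left _ (phiG_nonneg z)
      rw [← div_eq_inv_mul, le_div_iff₀ hu]
      linarith
    calc phiG z = phiG z * 1 := (mul_one _).symm
      _ ≤ phiG z * (u⁻¹ * z) := this
      _ = u⁻¹ * (z * phiG z) := by ring
  rwa [integral_Ioi_mul_phiG] at h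

lemma le_QG (u : ℝ) : u / (u^2+1) * phiG u ≤ QG u := by
  have hg : ∀ z : ℝ, HasDerivAt (fun z => z / (z^2+1) * phiG z)
      (-(phiG z * (1 - 2/(z^2+1)^2))) z := by
    intro z
    have h1 : HasDerivAt (fun z : ℝ => z / (z^2+1))
        ((1*(z^2+1) - z*(2*z)) / (z^2+1)^2) z := by
      have hz : (z:ℝ)^2 + 1 ≠ 0 := by positivity
      exact (hasDerivAt_id z).div ((hasDerivAt_pow 2 z).add_const 1)
        hz |>.congr_deriv (by simp only [id_eq]; ring)
    have := h1.mul (hasDerivAt_phiG z)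
    refine this.congr_deriv ?_
    have hz : (z:ℝ)^2 + 1 ≠ 0 := by positivity
    field_simp
    ring
  have hint : IntegrableOn (fun z => phiG z * (1 - 2/(z^2+1)^2)) (Set.Ioi u) := by
    refine (Integrable.mono' integrable_phiG ?_ ?_).integrableOn
    · exact (continuous_phiG.mul (continuous_const.sub (continuous_const.div
        (by fun_prop) (fun z => by positivity)))).aestronglyMeasurable
    · filter_upwards with z
      rw [Real.norm_eq_abs, abs_mul, abs_of_nonneg (phiG_nonneg z)]
      nth_rewrite 2 [← mul_one (phiG z)]
      apply mul_le_mul_of_nonneg_left _ (phiG_nonneg z)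
      rw [abs_le]
      constructor
      · have h2 : (0:ℝ) < (z^2+1)^2 := by positivity
        have h3 : 2/(z^2+1)^2 ≤ 2 := by
          rw [div_le_iff₀ h2]; nlinarith [sq_nonneg z, sq_nonneg (z^2)]
        linarith
      · have h2 : (0:ℝ) < (z^2+1)^2 := by positivity
        have : 0 ≤ 2/(z^2+1)^2 := by positivity
        linarith
  have heq : ∫ z in Set.Ioi u, phiG z * (1 - 2/(z^2+1)^2) = u / (u^2+1) * phiG u := by
    have h := integral_Ioi_of_hasDerivAt_of_tendsto
      (f := fun z => -(z / (z^2+1) * phiG z))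
      (f' := fun z => phiG z * (1 - 2/(z^2+1)^2)) (a := u) (m := 0)
      (((continuous_id.div ((continuous_pow 2).add (continuous_const : Continuous fun _ : ℝ => (1:ℝ)))
        (fun z => by show z^2 + 1 ≠ 0; positivity)).mul continuous_phiG).neg.continuousWithinAt)
      (fun x _ => by exact (hg x).neg.congr_deriv (neg_neg _))
      hint ?_
    · rw [h]; ring
    · have h1 : Tendsto (fun z : ℝ => z / (z^2+1)) atTop (nhds 0) := by
        refine tendsto_of_tendsto_of_tendsto_of_le_of_le' tendsto_const_nhds
          tendsto_inv_atTop_zero ?_ ?_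
        · filter_upwards [eventually_ge_atTop (0:ℝ)] with z hz
          positivity
        · filter_upwards [eventually_ge_atTop (1:ℝ)] with z hz
          rw [div_le_iff₀ (by positivity)]
          have hz0 : (0:ℝ) < z := by linarith
          rw [inv_mul_eq_div, le_div_iff₀ hz0]
          nlinarith
      have := (h1.mul tendsto_phiG_atTop).neg
      simpa using this
  rw [← heq]
  refine setIntegral_mono_on hint integrable_phiG.integrableOn measurableSet_Ioi ?_
  intro z _
  nth_rewrite 2 [← mul_one (phiG z)]
  apply mul_le_mul_of_nonneg_left _ (phiG_nonneg z)
  have : (0:ℝ) ≤ 2/(z^2+1)^2 := by positivity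
  linarith

lemma gaussianPDFReal_one_eq : gaussianPDFReal 0 1 = phiG := by
  funext x
  simp only [gaussianPDFReal, phiG]
  push_cast
  rw [mul_one, div_eq_inv_mul]
  ring_nf

lemma gaussianReal_one_eq : gaussianReal 0 1 =
    (volume : Measure ℝ).withDensity (fun x => ((Real.toNNReal (phiG x) : ℝ≥0) : ℝ≥0∞)) := by
  rw [gaussianReal_of_var_ne_zero 0 one_ne_zero]
  congr 1
  funext x
  rw [gaussianPDF, gaussianPDFReal_one_eq]
  rfl

lemma integral_std (g : ℝ → ℝ) : ∫ x, g x ∂(gaussianReal 0 1) = ∫ x, phiG x * g x := by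
  rw [gaussianReal_one_eq,
    integral_withDensity_eq_integral_smul (continuous_phiG.measurable.real_toNNReal) g]
  congr 1
  funext x
  rw [NNReal.smul_def, Real.coe_toNNReal _ (phiG_nonneg x)]
  rfl

lemma integrable_std_iff (g : ℝ → ℝ) (hg : Measurable g) :
    Integrable g (gaussianReal 0 1) ↔ Integrable (fun x => phiG x * g x) := by
  rw [gaussianReal_one_eq,
    integrable_withDensity_iff_integrable_smul (continuous_phiG.measurable.real_toNNReal)]
  constructor <;> intro h <;> refine h.congr (ae_of_all _ fun x => ?_) <;>
    simp only [NNReal.smul_def, Real.coe_toNNReal _ (phiG_nonneg x)] <;> rfl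

lemma gaussianReal_eq_map (w : ℝ) (hw : 0 < w) :
    gaussianReal 0 (Real.toNNReal w) =
      Measure.map (fun z => Real.sqrt w * z) (gaussianReal 0 1) := by
  rw [gaussianReal_map_const_mul (μ := 0) (v := 1) (Real.sqrt w)]
  congr 1
  · simp
  · ext
    simp [Real.sq_sqrt hw.le, hw.le]

lemma integral_gaussian_w (w : ℝ) (hw : 0 < w) (g : ℝ → ℝ)
    (hg : AEStronglyMeasurable g (volume : Measure ℝ)) :
    ∫ x, g x ∂(gaussianReal 0 (Real.toNNReal w)) = ∫ z, phiG z * g (Real.sqrt w * z) := by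
  have hac : Measure.map (fun z => Real.sqrt w * z) (gaussianReal 0 1) ≪ volume := by
    rw [← gaussianReal_eq_map w hw]
    exact gaussianReal_absolutelyContinuous _
      (by simp [Real.toNNReal_eq_zero, not_le, hw] : Real.toNNReal w ≠ 0)
  rw [gaussianReal_eq_map w hw, integral_map (by fun_prop) (hg.mono_ac hac), integral_std]

lemma tail_gaussian (w : ℝ) (hw : 0 < w) (t : ℝ) :
    (gaussianReal 0 (Real.toNNReal w)) (Set.Ioi t) = ENNReal.ofReal (QG (t / Real.sqrt w)) := by
  have hsw : 0 < Real.sqrt w := Real.sqrt_pos.2 hw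
  rw [gaussianReal_eq_map w hw, Measure.map_apply (by fun_prop) measurableSet_Ioi]
  have hpre : (fun z => Real.sqrt w * z) ⁻¹' (Set.Ioi t) = Set.Ioi (t / Real.sqrt w) := by
    ext z
    simp only [Set.mem_preimage, Set.mem_Ioi]
    rw [div_lt_iff₀ hsw, mul_comm]
  rw [hpre, gaussianReal_apply_eq_integral 0 one_ne_zero, gaussianPDFReal_one_eq]
  rfl

lemma integral_max_gaussian (w : ℝ) (hw : 0 < w) (m : ℝ) :
    ∫ x, max (x - m) 0 ∂(gaussianReal 0 (Real.toNNReal w)) =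
      Real.sqrt w * phiG (m / Real.sqrt w) - m * QG (m / Real.sqrt w) := by
  have hsw : 0 < Real.sqrt w := Real.sqrt_pos.2 hw
  set u := m / Real.sqrt w with hu
  rw [integral_gaussian_w w hw (fun x => max (x - m) 0) (((continuous_id.sub continuous_const).max continuous_const).aestronglyMeasurable)]
  have heq : (fun z => phiG z * max (Real.sqrt w * z - m) 0) =
      Set.indicator (Set.Ioi u) (fun z => Real.sqrt w * (z * phiG z) - m * phiG z) := by
    funext z
    by_cases hz : z ∈ Set.Ioi u
    · rw [Set.indicator_of_mem hz]
      have : (0:ℝ) ≤ Real.sqrt w * z - m := by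
        have : u < z := hz
        rw [hu, div_lt_iff₀ hsw] at this
        linarith [this]
      rw [max_eq_left this]
      ring
    · rw [Set.indicator_of_notMem hz]
      have hz' : z ≤ u := not_lt.1 hz
      have : Real.sqrt w * z - m ≤ 0 := by
        rw [hu, le_div_iff₀ hsw] at hz'
        linarith [hz']
      rw [max_eq_right this, mul_zero]
  rw [heq, integral_indicator measurableSet_Ioi, integral_sub
    ((integrable_mul_phiG.integrableOn).const_mul _) ((integrable_phiG.integrableOn).const_mul _),
    integral_const_mul, integral_const_mul, integral_Ioi_mul_phiG]
  rfl

lemma integrable_of_gaussian {Ω : Type*} [MeasureSpace Ω] {X : Ω → ℝ} (hX : Measurable X)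
    {w : ℝ} (hw : 0 < w) (h : Measure.map X ℙ = gaussianReal 0 (Real.toNNReal w)) :
    Integrable X ℙ := by
  have h1 : Integrable (id : ℝ → ℝ) (gaussianReal 0 (Real.toNNReal w)) := by
    rw [gaussianReal_eq_map w hw,
      integrable_map_measure aestronglyMeasurable_id (by fun_prop)]
    simp only [Function.comp_def, id_eq]
    refine Integrable.const_mul ?_ _
    rw [show (fun z : ℝ => z) = id from rfl, integrable_std_iff id measurable_id]
    exact integrable_mul_phiG.congr (ae_of_all _ fun x => by simp [mul_comm])
  have := (integrable_map_measure aestronglyMeasurable_id hX.aemeasurable).1 (h ▸ h1)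
  simpa using this

lemma hasDerivAt_FG {v : ℝ → ℝ} {v' ε₀ : ℝ} (m : ℝ) (hv : HasDerivAt v v' ε₀)
    (hpos : 0 < v ε₀) :
    HasDerivAt (fun ε => Real.sqrt (v ε) * phiG (m / Real.sqrt (v ε))
        - m * QG (m / Real.sqrt (v ε)))
      (v' * phiG (m / Real.sqrt (v ε₀)) / (2 * Real.sqrt (v ε₀))) ε₀ := by
  have hrpos : 0 < Real.sqrt (v ε₀) := Real.sqrt_pos.2 hpos
  have hrne : Real.sqrt (v ε₀) ≠ 0 := hrpos.ne'
  have hsq : HasDerivAt (fun ε => Real.sqrt (v ε)) (v' / (2 * Real.sqrt (v ε₀))) ε₀ :=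
    ((Real.hasDerivAt_sqrt hpos.ne').comp ε₀ hv).congr_deriv (by ring)
  have hquot : HasDerivAt (fun ε => m / Real.sqrt (v ε))
      (-(m * (v' / (2 * Real.sqrt (v ε₀)))) / v ε₀) ε₀ := by
    have h := (hasDerivAt_const ε₀ m).div hsq hrne
    refine h.congr_deriv ?_
    rw [Real.sq_sqrt hpos.le]
    ring
  have hphi := (hasDerivAt_phiG (m / Real.sqrt (v ε₀))).comp ε₀ hquot
  have hQ := (hasDerivAt_QG (m / Real.sqrt (v ε₀))).comp ε₀ hquot
  have htot := (hsq.mul hphi).sub ((hasDerivAt_const ε₀ m).mul hQ)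
  simp only [Function.comp_apply] at htot
  refine htot.congr_deriv ?_
  have h2 : Real.sqrt (v ε₀) ^ 2 = v ε₀ := Real.sq_sqrt hpos.le
  set r := Real.sqrt (v ε₀) with hrdef
  rw [← h2]
  field_simp
  ring

lemma QG_pos {u : ℝ} (hu : 0 < u) : 0 < QG u :=
  lt_of_lt_of_le (mul_pos (div_pos hu (by positivity)) (phiG_pos u)) (le_QG u)

lemma tendsto_mills : Tendsto (fun u : ℝ => phiG u / (u * QG u)) atTop (nhds 1) := by
  have hupper : Tendsto (fun u : ℝ => 1 + (u^2)⁻¹) atTop (nhds 1) := by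
    have := tendsto_const_nhds (x := (1:ℝ)) (f := atTop)
      |>.add ((tendsto_pow_atTop (two_ne_zero)).inv_tendsto_atTop)
    simpa using this
  refine tendsto_of_tendsto_of_tendsto_of_le_of_le' tendsto_const_nhds hupper ?_ ?_
  · filter_upwards [eventually_gt_atTop (0:ℝ)] with u hu
    have hQ := QG_pos hu
    have h1 : u * QG u ≤ phiG u := by
      have := QG_le u hu
      rw [le_div_iff₀ hu] at this
      linarith [this]
    rw [le_div_iff₀ (by positivity)]
    linarith
  · filter_upwards [eventually_gt_atTop (0:ℝ)] with u hu
    have hQ := QG_pos hu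
    have hlow : u * (u / (u^2+1) * phiG u) ≤ u * QG u :=
      mul_le_mul_of_nonneg_left (le_QG u) hu.le
    have hlowpos : 0 < u * (u / (u^2+1) * phiG u) := by
      have := phiG_pos u
      positivity
    calc phiG u / (u * QG u) ≤ phiG u / (u * (u / (u^2+1) * phiG u)) :=
          div_le_div_of_nonneg_left (phiG_nonneg u) hlowpos hlow
      _ = 1 + (u^2)⁻¹ := by
          have := (phiG_pos u).ne'
          field_simp

/-- Expectation of `X` conditioned on an event `s` (i.e. `E[X·1ₛ]/P(s)`). -/
noncomputable def condExpEvent {Ω : Type*} [MeasureSpace Ω] (X : Ω → ℝ) (s : Set Ω) : ℝ :=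
  (∫ ω in s, X ω) / (ℙ s).toReal

/-- Benign Goodhart in the Gaussian case: conditionally on `{M > m}`,
`E[G | M > m] ~ ((a+c)/(a+b+2c)) m` as `m → ∞`. -/
theorem gaussian_condExp_goal_equiv {Ω : Type*} [MeasureSpace Ω] [IsProbabilityMeasure (ℙ : Measure Ω)]
    (G ξ : Ω → ℝ) (hG : Measurable G) (hξ : Measurable ξ)
    (a b c : ℝ) (ha : 0 < a) (hb : 0 < b) (hc : |c| < Real.sqrt (a * b))
    (hlaw : ∀ u v : ℝ, Measure.map (fun ω => u * G ω + v * ξ ω) ℙ =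
      gaussianReal 0 (Real.toNNReal (u ^ 2 * a + 2 * u * v * c + v ^ 2 * b))) (hac : 0 < a + c) :
    (fun m : ℝ => condExpEvent G {ω | m < G ω + ξ ω})
      ~[atTop] (fun m : ℝ => (a + c) / (a + b + 2 * c) * m) := by
  have hc2 : c^2 < a*b := by
    have h1 : |c|^2 < (Real.sqrt (a*b))^2 :=
      pow_lt_pow_left₀ hc (abs_nonneg c) (by norm_num)
    rwa [sq_abs, Real.sq_sqrt (by positivity)] at h1
  have hspos : 0 < a + b + 2*c := by
    by_contra h
    push_neg at h
    nlinarith [sq_nonneg (a-b)]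
  set s : ℝ := a + b + 2*c with hs_def
  have hrpos : 0 < Real.sqrt s := Real.sqrt_pos.2 hspos
  set r : ℝ := Real.sqrt s with hr_def
  have hrr : r * r = s := Real.mul_self_sqrt hspos.le
  -- law of M
  have hM : Measure.map (fun ω => G ω + ξ ω) ℙ = gaussianReal 0 (Real.toNNReal s) := by
    have h := hlaw 1 1
    simp only [one_mul, mul_one, one_pow] at h
    rw [show a + 2*c + b = s from by rw [hs_def]; ring] at h
    exact h
  -- integrability of G and ξ
  have hGint : Integrable G ℙ := by
    refine integrable_of_gaussian hG ha ?_
    have h := hlaw 1 0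
    simpa using h
  have hξint : Integrable ξ ℙ := by
    refine integrable_of_gaussian hξ hb ?_
    have h := hlaw 0 1
    simpa using h
  have hMint : Integrable (fun ω => G ω + ξ ω) ℙ := hGint.add hξint
  -- family of variances
  set v : ℝ → ℝ := fun ε => a*ε^2 + 2*(a+c)*ε + s with hv_def
  have hvpos : ∀ ε, 0 < v ε := by
    intro ε
    have h1 : 0 ≤ (a*ε + (a+c))^2 := sq_nonneg _
    have : a * v ε = (a*ε + (a+c))^2 + (a*b - c^2) := by rw [hv_def, hs_def]; ring
    nlinarith
  have hv0 : v 0 = s := by rw [hv_def]; ring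
  have hvder : HasDerivAt v (2*(a+c)) 0 := by
    have h := (((hasDerivAt_pow 2 (0:ℝ)).const_mul a).add
      ((hasDerivAt_id (0:ℝ)).const_mul (2*(a+c)))).add_const s
    refine (h.congr_deriv (by norm_num)).congr_of_eventuallyEq ?_
    filter_upwards with ε
    simp only [hv_def, id_eq, Pi.add_apply]
    try ring
  have hset : ∀ m : ℝ, MeasurableSet {ω | m < G ω + ξ ω} :=
    fun m => measurableSet_lt measurable_const (hG.add hξ)
  -- numerator
  have hnum : ∀ m : ℝ, (∫ ω in {ω | m < G ω + ξ ω}, G ω ∂ℙ) = (a+c) * phiG (m/r) / r := by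
    intro m
    have hKF : ∀ ε : ℝ, (∫ ω, max ((1+ε) * G ω + ξ ω - m) 0 ∂ℙ)
        = Real.sqrt (v ε) * phiG (m / Real.sqrt (v ε)) - m * QG (m / Real.sqrt (v ε)) := by
      intro ε
      have hlawε : Measure.map (fun ω => (1+ε) * G ω + ξ ω) ℙ
          = gaussianReal 0 (Real.toNNReal (v ε)) := by
        have h := hlaw (1+ε) 1
        simp only [one_mul, mul_one, one_pow] at h
        rw [show (1+ε)^2*a + 2*(1+ε)*c + b = v ε from by rw [hv_def, hs_def]; ring] at h
        exact h
      rw [← integral_max_gaussian (v ε) (hvpos ε) m, ← hlawε,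
        integral_map (φ := fun ω => (1+ε) * G ω + ξ ω) (((hG.const_mul _).add hξ).aemeasurable)
          (((continuous_sub_right m).max continuous_const).aestronglyMeasurable)]
    have hnull : (ℙ : Measure Ω) {ω | G ω + ξ ω = m} = 0 := by
      have heq : {ω | G ω + ξ ω = m} = (fun ω => G ω + ξ ω) ⁻¹' {m} := rfl
      rw [heq, ← Measure.map_apply (by fun_prop) (measurableSet_singleton m), hM]
      exact gaussianReal_absolutelyContinuous 0
        (by simp [Real.toNNReal_eq_zero, not_le, hspos]) Real.volume_singleton
    have hae : ∀ᵐ ω ∂(ℙ : Measure Ω), G ω + ξ ω ≠ m := by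
      rw [ae_iff]
      simpa using hnull
    have hdom := hasDerivAt_integral_of_dominated_loc_of_lip
      (F := fun ε ω => max ((1+ε) * G ω + ξ ω - m) 0)
      (F' := fun ω => Set.indicator {ω | m < G ω + ξ ω} G ω)
      (x₀ := (0:ℝ)) (bound := fun ω => |G ω|) (Metric.ball_mem_nhds _ one_pos)
      (Filter.Eventually.of_forall fun x =>
        ((((hG.const_mul (1+x)).add hξ).sub measurable_const).max
          measurable_const).aestronglyMeasurable)
      (((hMint.sub (integrable_const m)).pos_part).congr
        (ae_of_all _ fun ω => by norm_num))
      ((hG.indicator (hset m)).aestronglyMeasurable)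
      (ae_of_all _ fun ω => by
        have hlip : LipschitzWith (Real.nnabs (|G ω|))
            (fun ε : ℝ => max ((1+ε) * G ω + ξ ω - m) 0) := by
          refine LipschitzWith.of_dist_le_mul fun x y => ?_
          rw [Real.dist_eq, Real.dist_eq]
          calc |max ((1+x) * G ω + ξ ω - m) 0 - max ((1+y) * G ω + ξ ω - m) 0|
              ≤ |((1+x) * G ω + ξ ω - m) - ((1+y) * G ω + ξ ω - m)| :=
                abs_max_sub_max_le_abs _ _ _
            _ = (Real.nnabs (|G ω|) : ℝ) * |x - y| := by
                rw [Real.coe_nnabs, abs_abs, show ((1+x) * G ω + ξ ω - m)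
                  - ((1+y) * G ω + ξ ω - m) = (x - y) * G ω from by ring, abs_mul]
                ring
        exact hlip.lipschitzOnWith)
      (hGint.abs)
      (by
        filter_upwards [hae] with ω hω
        rcases hω.lt_or_gt with hlt | hgt
        · have hmem : ω ∉ {ω | m < G ω + ξ ω} := by
            simp only [Set.mem_setOf_eq, not_lt]
            linarith
          rw [Set.indicator_of_notMem hmem]
          have hev : ∀ᶠ ε in nhds (0:ℝ), (1+ε) * G ω + ξ ω - m < 0 := by
            have hcont : ContinuousAt (fun ε : ℝ => (1+ε) * G ω + ξ ω - m) 0 := by fun_prop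
            have h0 : (1+(0:ℝ)) * G ω + ξ ω - m < 0 := by norm_num; linarith
            exact hcont (Iio_mem_nhds h0)
          refine (hasDerivAt_const (0:ℝ) (0:ℝ)).congr_of_eventuallyEq ?_
          filter_upwards [hev] with ε hε
          rw [max_eq_right hε.le]
        · have hmem : ω ∈ {ω | m < G ω + ξ ω} := hgt
          rw [Set.indicator_of_mem hmem]
          have hev : ∀ᶠ ε in nhds (0:ℝ), 0 < (1+ε) * G ω + ξ ω - m := by
            have hcont : ContinuousAt (fun ε : ℝ => (1+ε) * G ω + ξ ω - m) 0 := by fun_prop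
            have h0 : 0 < (1+(0:ℝ)) * G ω + ξ ω - m := by norm_num; linarith
            exact hcont (Ioi_mem_nhds h0)
          have hbase : HasDerivAt (fun ε : ℝ => (1+ε) * G ω + ξ ω - m) (G ω) 0 := by
            have h := (((hasDerivAt_id (0:ℝ)).const_add 1).mul_const (G ω)).add_const (ξ ω - m)
            refine (h.congr_deriv (by simp)).congr_of_eventuallyEq ?_
            filter_upwards with ε
            simp only [id_eq]
            ring
          refine hbase.congr_of_eventuallyEq ?_
          filter_upwards [hev] with ε hε
          rw [max_eq_left hε.le])
    have hKder := hdom.2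
    rw [show (fun ε : ℝ => ∫ ω, max ((1+ε) * G ω + ξ ω - m) 0 ∂ℙ)
      = (fun ε : ℝ => Real.sqrt (v ε) * phiG (m / Real.sqrt (v ε))
          - m * QG (m / Real.sqrt (v ε))) from funext hKF] at hKder
    have hFder := hasDerivAt_FG m hvder (by rw [hv0]; exact hspos)
    rw [hv0] at hFder
    have huniq := hKder.unique hFder
    rw [integral_indicator (hset m)] at huniq
    rw [huniq, ← hr_def]
    field_simp
  -- denominator
  have hden : ∀ m : ℝ, ((ℙ : Measure Ω) {ω | m < G ω + ξ ω}).toReal = QG (m/r) := by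
    intro m
    have heq : {ω | m < G ω + ξ ω} = (fun ω => G ω + ξ ω) ⁻¹' (Set.Ioi m) := rfl
    rw [heq, ← Measure.map_apply (by fun_prop) measurableSet_Ioi, hM,
      tail_gaussian s hspos m, ENNReal.toReal_ofReal (QG_nonneg _), ← hr_def]
  -- conclusion
  rw [Asymptotics.isEquivalent_iff_tendsto_one (by
    filter_upwards [eventually_gt_atTop (0:ℝ)] with m hm
    have : 0 < (a+c)/(a+b+2*c) * m := mul_pos (div_pos hac hspos) hm
    exact this.ne')]
  have hcomp : Tendsto (fun m : ℝ => phiG (m/r) / ((m/r) * QG (m/r))) atTop (nhds 1) :=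
    tendsto_mills.comp (tendsto_id.atTop_div_const hrpos)
  refine hcomp.congr' ?_
  filter_upwards [eventually_gt_atTop (0:ℝ)] with m hm
  have hu : 0 < m / r := div_pos hm hrpos
  have hQ : 0 < QG (m/r) := QG_pos hu
  have hphi := phiG_pos (m/r)
  rw [Pi.div_apply, condExpEvent, hnum m, hden m]
  have h1 : QG (m/r) ≠ 0 := hQ.ne'
  have hrne : r ≠ 0 := hrpos.ne'
  have hsne : s ≠ 0 := hspos.ne'
  have hacne : a + c ≠ 0 := hac.ne'
  field_simp
  linear_combination hrr
end

section
/- Let (G, ξ) be a centered bivariate Gaussian vector with covariance matrix [[a, c], [c, b]], a, b > 0, |c| < √(ab), and M = G + ξ. Then E[ξ | M > m] ~ ((b+c)/(a+b+2c)) · m as m → ∞ (assuming b + c > 0). -/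
open MeasureTheory ProbabilityTheory Filter Asymptotics Real

namespace GaussAux

open Set
open scoped NNReal ENNReal

/-! ### Calculus lemmas -/

lemma integrableOn_exp_sq {v : ℝ} (hv : 0 < v) (p : ℝ) :
    IntegrableOn (fun x : ℝ => rexp (-x ^ 2 / (2 * v))) (Ioi p) := by
  have h : (fun x : ℝ => rexp (-x ^ 2 / (2 * v))) = fun x : ℝ => rexp (-(2 * v)⁻¹ * x ^ 2) := by
    funext x; ring_nf
  rw [h]
  exact (integrable_exp_neg_mul_sq (by positivity)).integrableOn

lemma hasDerivAt_exp_sq {v : ℝ} (hv : 0 < v) (x : ℝ) :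
    HasDerivAt (fun x : ℝ => rexp (-x ^ 2 / (2 * v))) (-(x / v) * rexp (-x ^ 2 / (2 * v))) x := by
  have h1 : HasDerivAt (fun x : ℝ => -x ^ 2 / (2 * v)) (-(x / v)) x := by
    have := ((hasDerivAt_pow 2 x).neg).div_const (2 * v)
    refine this.congr_deriv ?_
    field_simp
    ring
  simpa [mul_comm] using h1.exp

lemma tendsto_exp_sq {v : ℝ} (hv : 0 < v) :
    Tendsto (fun x : ℝ => rexp (-x ^ 2 / (2 * v))) atTop (nhds 0) := by
  have h : (fun x : ℝ => rexp (-x ^ 2 / (2 * v))) = fun x : ℝ => rexp (-((2 * v)⁻¹ * x ^ 2)) := by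
    funext x; ring_nf
  rw [h]
  apply Real.tendsto_exp_neg_atTop_nhds_zero.comp
  apply Tendsto.const_mul_atTop (by positivity)
  exact tendsto_pow_atTop (by norm_num)

lemma calc1 {v : ℝ} (hv : 0 < v) {p : ℝ} (hp : 0 ≤ p) :
    ∫ x in Ioi p, x * rexp (-x ^ 2 / (2 * v)) = v * rexp (-p ^ 2 / (2 * v)) := by
  have hderiv : ∀ x ∈ Ici p, HasDerivAt (fun x : ℝ => -v * rexp (-x ^ 2 / (2 * v)))
      (x * rexp (-x ^ 2 / (2 * v))) x := by
    intro x _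
    have := (hasDerivAt_exp_sq hv x).const_mul (-v)
    refine this.congr_deriv ?_
    field_simp
  have hpos : ∀ x ∈ Ioi p, 0 ≤ x * rexp (-x ^ 2 / (2 * v)) := by
    intro x hx
    have : (0:ℝ) < x := lt_of_le_of_lt hp hx
    positivity
  have htend : Tendsto (fun x : ℝ => -v * rexp (-x ^ 2 / (2 * v))) atTop (nhds 0) := by
    simpa using (tendsto_exp_sq hv).const_mul (-v)
  have := integral_Ioi_of_hasDerivAt_of_nonneg' hderiv hpos htend
  rw [this]; ring

lemma integrableOn_x_exp_sq {v : ℝ} (hv : 0 < v) {p : ℝ} (hp : 0 ≤ p) :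
    IntegrableOn (fun x : ℝ => x * rexp (-x ^ 2 / (2 * v))) (Ioi p) := by
  have hderiv : ∀ x ∈ Ici p, HasDerivAt (fun x : ℝ => -v * rexp (-x ^ 2 / (2 * v)))
      (x * rexp (-x ^ 2 / (2 * v))) x := by
    intro x _
    have := (hasDerivAt_exp_sq hv x).const_mul (-v)
    refine this.congr_deriv ?_
    field_simp
  have hpos : ∀ x ∈ Ioi p, 0 ≤ x * rexp (-x ^ 2 / (2 * v)) := by
    intro x hx
    have : (0:ℝ) < x := lt_of_le_of_lt hp hx
    positivity
  have htend : Tendsto (fun x : ℝ => -v * rexp (-x ^ 2 / (2 * v))) atTop (nhds 0) := by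
    simpa using (tendsto_exp_sq hv).const_mul (-v)
  exact integrableOn_Ioi_deriv_of_nonneg' hderiv hpos htend

lemma calc2 {v : ℝ} (hv : 0 < v) {p : ℝ} (hp : 0 < p) :
    ∫ x in Ioi p, (1 + v / x ^ 2) * rexp (-x ^ 2 / (2 * v)) = v / p * rexp (-p ^ 2 / (2 * v)) := by
  have hderiv : ∀ x ∈ Ici p, HasDerivAt (fun x : ℝ => -(v / x) * rexp (-x ^ 2 / (2 * v)))
      ((1 + v / x ^ 2) * rexp (-x ^ 2 / (2 * v))) x := by
    intro x hx
    have hx0 : x ≠ 0 := by have := lt_of_lt_of_le hp hx; positivity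
    have h1 : HasDerivAt (fun x : ℝ => -(v / x)) (v / x ^ 2) x := by
      have := (hasDerivAt_inv hx0).const_mul v
      have h2 := this.neg
      refine h2.congr_deriv ?_
      ring
    have := h1.mul (hasDerivAt_exp_sq hv x)
    refine this.congr_deriv ?_
    field_simp
    ring
  have hpos : ∀ x ∈ Ioi p, 0 ≤ (1 + v / x ^ 2) * rexp (-x ^ 2 / (2 * v)) := by
    intro x hx
    have : (0:ℝ) < x := lt_trans hp hx
    positivity
  have htend : Tendsto (fun x : ℝ => -(v / x) * rexp (-x ^ 2 / (2 * v))) atTop (nhds 0) := by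
    have h1 : Tendsto (fun x : ℝ => -(v / x)) atTop (nhds 0) := by
      simpa [div_eq_mul_inv] using (tendsto_inv_atTop_zero.const_mul v).neg
    simpa using h1.mul (tendsto_exp_sq hv)
  have := integral_Ioi_of_hasDerivAt_of_nonneg' hderiv hpos htend
  rw [this]; ring

lemma integrableOn_aux_exp_sq {v : ℝ} (hv : 0 < v) {p : ℝ} (hp : 0 < p) :
    IntegrableOn (fun x : ℝ => (1 + v / x ^ 2) * rexp (-x ^ 2 / (2 * v))) (Ioi p) := by
  have hderiv : ∀ x ∈ Ici p, HasDerivAt (fun x : ℝ => -(v / x) * rexp (-x ^ 2 / (2 * v)))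
      ((1 + v / x ^ 2) * rexp (-x ^ 2 / (2 * v))) x := by
    intro x hx
    have hx0 : x ≠ 0 := by have := lt_of_lt_of_le hp hx; positivity
    have h1 : HasDerivAt (fun x : ℝ => -(v / x)) (v / x ^ 2) x := by
      have := (hasDerivAt_inv hx0).const_mul v
      have h2 := this.neg
      refine h2.congr_deriv ?_
      ring
    have := h1.mul (hasDerivAt_exp_sq hv x)
    refine this.congr_deriv ?_
    field_simp
    ring
  have hpos : ∀ x ∈ Ioi p, 0 ≤ (1 + v / x ^ 2) * rexp (-x ^ 2 / (2 * v)) := by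
    intro x hx
    have : (0:ℝ) < x := lt_trans hp hx
    positivity
  have htend : Tendsto (fun x : ℝ => -(v / x) * rexp (-x ^ 2 / (2 * v))) atTop (nhds 0) := by
    have h1 : Tendsto (fun x : ℝ => -(v / x)) atTop (nhds 0) := by
      simpa [div_eq_mul_inv] using (tendsto_inv_atTop_zero.const_mul v).neg
    simpa using h1.mul (tendsto_exp_sq hv)
  exact integrableOn_Ioi_deriv_of_nonneg' hderiv hpos htend

/-! ### Mills ratio bounds -/

lemma mills_upper {v : ℝ} (hv : 0 < v) {p : ℝ} (hp : 0 < p) :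
    ∫ x in Ioi p, rexp (-x ^ 2 / (2 * v)) ≤ v / p * rexp (-p ^ 2 / (2 * v)) := by
  have hmono : ∀ x ∈ Ioi p, rexp (-x ^ 2 / (2 * v)) ≤ p⁻¹ * (x * rexp (-x ^ 2 / (2 * v))) := by
    intro x hx
    have hx0 : p < x := hx
    have h1 : (1:ℝ) ≤ p⁻¹ * x := by
      rw [inv_mul_eq_div, le_div_iff₀ hp]
      linarith
    calc rexp (-x ^ 2 / (2 * v)) = 1 * rexp (-x ^ 2 / (2 * v)) := by ring
      _ ≤ (p⁻¹ * x) * rexp (-x ^ 2 / (2 * v)) := by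
          apply mul_le_mul_of_nonneg_right h1 (exp_nonneg _)
      _ = p⁻¹ * (x * rexp (-x ^ 2 / (2 * v))) := by ring
  calc ∫ x in Ioi p, rexp (-x ^ 2 / (2 * v))
      ≤ ∫ x in Ioi p, p⁻¹ * (x * rexp (-x ^ 2 / (2 * v))) := by
        apply setIntegral_mono_on (integrableOn_exp_sq hv p)
          ((integrableOn_x_exp_sq hv hp.le).const_mul _) measurableSet_Ioi hmono
    _ = p⁻¹ * ∫ x in Ioi p, x * rexp (-x ^ 2 / (2 * v)) := by rw [integral_const_mul]
    _ = v / p * rexp (-p ^ 2 / (2 * v)) := by rw [calc1 hv hp.le]; field_simp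

lemma mills_lower {v : ℝ} (hv : 0 < v) {p : ℝ} (hp : 0 < p) :
    v / p * rexp (-p ^ 2 / (2 * v))
      ≤ (1 + v / p ^ 2) * ∫ x in Ioi p, rexp (-x ^ 2 / (2 * v)) := by
  have hmono : ∀ x ∈ Ioi p, (1 + v / x ^ 2) * rexp (-x ^ 2 / (2 * v))
      ≤ (1 + v / p ^ 2) * rexp (-x ^ 2 / (2 * v)) := by
    intro x hx
    have hx0 : p < x := hx
    apply mul_le_mul_of_nonneg_right _ (exp_nonneg _)
    have : v / x ^ 2 ≤ v / p ^ 2 := by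
      apply div_le_div_of_nonneg_left hv.le (by positivity)
      nlinarith
    linarith
  calc v / p * rexp (-p ^ 2 / (2 * v))
      = ∫ x in Ioi p, (1 + v / x ^ 2) * rexp (-x ^ 2 / (2 * v)) := (calc2 hv hp).symm
    _ ≤ ∫ x in Ioi p, (1 + v / p ^ 2) * rexp (-x ^ 2 / (2 * v)) :=
        setIntegral_mono_on (integrableOn_aux_exp_sq hv hp)
          ((integrableOn_exp_sq hv p).const_mul _) measurableSet_Ioi hmono
    _ = (1 + v / p ^ 2) * ∫ x in Ioi p, rexp (-x ^ 2 / (2 * v)) := integral_const_mul _ _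

lemma tail_pos {v : ℝ} (hv : 0 < v) {p : ℝ} (hp : 0 < p) :
    0 < ∫ x in Ioi p, rexp (-x ^ 2 / (2 * v)) := by
  have h := mills_lower hv hp
  have h1 : 0 < v / p * rexp (-p ^ 2 / (2 * v)) := by positivity
  have h2 : (0:ℝ) ≤ ∫ x in Ioi p, rexp (-x ^ 2 / (2 * v)) :=
    setIntegral_nonneg measurableSet_Ioi (fun x _ => exp_nonneg _)
  nlinarith [div_nonneg hv.le (sq_nonneg p)]

lemma mills_tendsto {v : ℝ} (hv : 0 < v) :
    Tendsto (fun p : ℝ => v * rexp (-p ^ 2 / (2 * v)) /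
      (p * ∫ x in Ioi p, rexp (-x ^ 2 / (2 * v)))) atTop (nhds 1) := by
  have hub : ∀ᶠ p in atTop, v * rexp (-p ^ 2 / (2 * v)) /
      (p * ∫ x in Ioi p, rexp (-x ^ 2 / (2 * v))) ≤ 1 + v / p ^ 2 := by
    filter_upwards [eventually_gt_atTop (0:ℝ)] with p hp
    have htp := tail_pos hv hp (v := v)
    rw [div_le_iff₀ (by positivity)]
    have := mills_lower hv hp (v := v)
    calc v * rexp (-p ^ 2 / (2 * v)) = p * (v / p * rexp (-p ^ 2 / (2 * v))) := by
          field_simp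
      _ ≤ p * ((1 + v / p ^ 2) * ∫ x in Ioi p, rexp (-x ^ 2 / (2 * v))) := by
          apply mul_le_mul_of_nonneg_left this hp.le
      _ = (1 + v / p ^ 2) * (p * ∫ x in Ioi p, rexp (-x ^ 2 / (2 * v))) := by ring
  have hlb : ∀ᶠ p in atTop, 1 ≤ v * rexp (-p ^ 2 / (2 * v)) /
      (p * ∫ x in Ioi p, rexp (-x ^ 2 / (2 * v))) := by
    filter_upwards [eventually_gt_atTop (0:ℝ)] with p hp
    have htp := tail_pos hv hp (v := v)
    rw [le_div_iff₀ (by positivity), one_mul]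
    have := mills_upper hv hp (v := v)
    calc p * ∫ x in Ioi p, rexp (-x ^ 2 / (2 * v))
        ≤ p * (v / p * rexp (-p ^ 2 / (2 * v))) := by
          apply mul_le_mul_of_nonneg_left this hp.le
      _ = v * rexp (-p ^ 2 / (2 * v)) := by field_simp
  have hup : Tendsto (fun p : ℝ => 1 + v / p ^ 2) atTop (nhds 1) := by
    have : Tendsto (fun p : ℝ => v / p ^ 2) atTop (nhds 0) := by
      apply Tendsto.div_atTop tendsto_const_nhds
      exact tendsto_pow_atTop (by norm_num)
    simpa using tendsto_const_nhds.add this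
  exact tendsto_of_tendsto_of_tendsto_of_le_of_le' tendsto_const_nhds hup hlb hub

/-! ### The tail function and the explicit parametric integral -/

lemma integrable_exp_sq_one : Integrable (fun y : ℝ => rexp (-y ^ 2 / 2)) := by
  have h : (fun y : ℝ => rexp (-y ^ 2 / 2)) = fun y : ℝ => rexp (-(2 : ℝ)⁻¹ * y ^ 2) := by
    funext y; ring_nf
  rw [h]
  exact integrable_exp_neg_mul_sq (by norm_num)

/-- Gaussian tail function (unnormalized, standard). -/
noncomputable def gtail (t : ℝ) : ℝ := ∫ y in Ioi t, rexp (-y ^ 2 / 2)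

lemma hasDerivAt_gtail (t : ℝ) : HasDerivAt gtail (-rexp (-t ^ 2 / 2)) t := by
  have hint := integrable_exp_sq_one
  have heq : gtail = fun u : ℝ =>
      (∫ y, rexp (-y ^ 2 / 2)) - (∫ y in Iic (0:ℝ), rexp (-y ^ 2 / 2))
        - ∫ y in (0:ℝ)..u, rexp (-y ^ 2 / 2) := by
    funext u
    have h1 : (∫ y in Iic u, rexp (-y ^ 2 / 2)) + ∫ y in Ioi u, rexp (-y ^ 2 / 2)
        = ∫ y, rexp (-y ^ 2 / 2) := by
      have := integral_add_compl (measurableSet_Iic (a := u)) hint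
      simpa [compl_Iic] using this
    have h2 : (∫ y in Iic u, rexp (-y ^ 2 / 2)) - ∫ y in Iic (0:ℝ), rexp (-y ^ 2 / 2)
        = ∫ y in (0:ℝ)..u, rexp (-y ^ 2 / 2) :=
      intervalIntegral.integral_Iic_sub_Iic hint.integrableOn hint.integrableOn
    simp only [gtail]
    linarith
  rw [heq]
  have hd : HasDerivAt (fun u : ℝ => ∫ y in (0:ℝ)..u, rexp (-y ^ 2 / 2)) (rexp (-t ^ 2 / 2)) t :=
    intervalIntegral.integral_hasDerivAt_right hint.intervalIntegrable
      hint.aestronglyMeasurable.stronglyMeasurableAtFilter (by fun_prop)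
  simpa using (hd.const_sub _)

lemma gtail_comp {v : ℝ} (hv : 0 < v) (p : ℝ) :
    ∫ x in Ioi p, rexp (-x ^ 2 / (2 * v)) = Real.sqrt v * gtail (p / Real.sqrt v) := by
  have hsv : 0 < Real.sqrt v := Real.sqrt_pos.mpr hv
  have h := integral_comp_mul_left_Ioi (fun y : ℝ => rexp (-y ^ 2 / 2)) p
    (inv_pos.mpr hsv)
  have heq : ∀ x : ℝ, rexp (-((Real.sqrt v)⁻¹ * x) ^ 2 / 2) = rexp (-x ^ 2 / (2 * v)) := by
    intro x
    congr 1
    rw [mul_pow, ← Real.sqrt_inv, Real.sq_sqrt (by positivity)]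
    field_simp
  rw [show ((Real.sqrt v)⁻¹ * p) = p / Real.sqrt v by ring] at h
  calc ∫ x in Ioi p, rexp (-x ^ 2 / (2 * v))
      = ∫ x in Ioi p, rexp (-((Real.sqrt v)⁻¹ * x) ^ 2 / 2) := by
        apply setIntegral_congr_fun measurableSet_Ioi
        intro x _; exact (heq x).symm
    _ = ((Real.sqrt v)⁻¹)⁻¹ • ∫ y in Ioi (p / Real.sqrt v), rexp (-y ^ 2 / 2) := h
    _ = Real.sqrt v * gtail (p / Real.sqrt v) := by
        rw [inv_inv, gtail, smul_eq_mul]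

/-- Explicit value of `∫ max (x-m) 0` against a gaussian with variance `v`, as function of `v`. -/
noncomputable def B (m : ℝ) (v : ℝ) : ℝ :=
  (Real.sqrt v * rexp (-m ^ 2 / (2 * v)) - m * gtail (m / Real.sqrt v)) / Real.sqrt (2 * π)

lemma hasDerivAt_B (m : ℝ) {s : ℝ} (hs : 0 < s) :
    HasDerivAt (B m) (rexp (-m ^ 2 / (2 * s)) / (2 * Real.sqrt s * Real.sqrt (2 * π))) s := by
  have hss : Real.sqrt s ≠ 0 := (Real.sqrt_pos.mpr hs).ne'
  have hsq : Real.sqrt s ^ 2 = s := Real.sq_sqrt hs.le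
  have hsqrt : HasDerivAt Real.sqrt (1 / (2 * Real.sqrt s)) s := Real.hasDerivAt_sqrt hs.ne'
  have hE : HasDerivAt (fun v : ℝ => rexp (-m ^ 2 / (2 * v)))
      (rexp (-m ^ 2 / (2 * s)) * (m ^ 2 / (2 * s ^ 2))) s := by
    have hinner : HasDerivAt (fun v : ℝ => -m ^ 2 / (2 * v)) (m ^ 2 / (2 * s ^ 2)) s := by
      have h0 : HasDerivAt (fun v : ℝ => (-m ^ 2 / 2) * v⁻¹) ((-m ^ 2 / 2) * (-(s ^ 2)⁻¹)) s :=
        (hasDerivAt_inv hs.ne').const_mul _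
      have hfun : (fun v : ℝ => (-m ^ 2 / 2) * v⁻¹) = fun v : ℝ => -m ^ 2 / (2 * v) := by
        funext v; ring
      rw [hfun] at h0
      convert h0 using 1
      field_simp
    simpa [mul_comm] using hinner.exp
  have hQ : HasDerivAt (fun v : ℝ => m / Real.sqrt v) (-(m / (2 * s * Real.sqrt s))) s := by
    have h0 : HasDerivAt (fun v : ℝ => m * (Real.sqrt v)⁻¹)
        (m * (-(1 / (2 * Real.sqrt s)) / Real.sqrt s ^ 2)) s := (hsqrt.inv hss).const_mul m
    have hfun : (fun v : ℝ => m * (Real.sqrt v)⁻¹) = fun v : ℝ => m / Real.sqrt v := by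
      funext v; ring
    rw [hfun] at h0
    convert h0 using 1
    rw [hsq]
    field_simp
  have hT : HasDerivAt (fun v : ℝ => gtail (m / Real.sqrt v))
      (-rexp (-(m / Real.sqrt s) ^ 2 / 2) * (-(m / (2 * s * Real.sqrt s)))) s := by
    have := (hasDerivAt_gtail (m / Real.sqrt s)).comp s hQ; exact this
  have hexp_eq : rexp (-(m / Real.sqrt s) ^ 2 / 2) = rexp (-m ^ 2 / (2 * s)) := by
    congr 1
    rw [div_pow, hsq]; ring
  rw [hexp_eq] at hT
  have hmain : HasDerivAt (fun v : ℝ => Real.sqrt v * rexp (-m ^ 2 / (2 * v)) -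
      m * gtail (m / Real.sqrt v))
      ((1 / (2 * Real.sqrt s)) * rexp (-m ^ 2 / (2 * s)) +
        Real.sqrt s * (rexp (-m ^ 2 / (2 * s)) * (m ^ 2 / (2 * s ^ 2))) -
        m * (-rexp (-m ^ 2 / (2 * s)) * (-(m / (2 * s * Real.sqrt s))))) s :=
    (hsqrt.mul hE).sub (hT.const_mul m)
  have key : (1 / (2 * Real.sqrt s)) * rexp (-m ^ 2 / (2 * s)) +
        Real.sqrt s * (rexp (-m ^ 2 / (2 * s)) * (m ^ 2 / (2 * s ^ 2))) -
        m * (-rexp (-m ^ 2 / (2 * s)) * (-(m / (2 * s * Real.sqrt s))))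
      = rexp (-m ^ 2 / (2 * s)) / (2 * Real.sqrt s) := by
    obtain ⟨u, hu0, rfl⟩ : ∃ u : ℝ, 0 < u ∧ u ^ 2 = s :=
      ⟨Real.sqrt s, Real.sqrt_pos.mpr hs, hsq⟩
    rw [Real.sqrt_sq hu0.le]
    field_simp
    ring
  have hfinal := hmain.div_const (Real.sqrt (2 * π))
  rw [key] at hfinal
  have : rexp (-m ^ 2 / (2 * s)) / (2 * Real.sqrt s) / Real.sqrt (2 * π)
      = rexp (-m ^ 2 / (2 * s)) / (2 * Real.sqrt s * Real.sqrt (2 * π)) := div_div _ _ _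
  rw [this] at hfinal
  exact hfinal

/-! ### Gaussian integral computations -/

/-- Integral against a gaussian measure as weighted Lebesgue integral. -/
lemma integral_gaussianReal {v : ℝ} (hv : 0 < v) (g : ℝ → ℝ) :
    ∫ x, g x ∂(gaussianReal 0 (Real.toNNReal v))
      = ∫ x, gaussianPDFReal 0 (Real.toNNReal v) x * g x := by
  have hvt : Real.toNNReal v ≠ 0 := by
    simp [Real.toNNReal_eq_zero, not_le, hv]
  rw [gaussianReal_of_var_ne_zero 0 hvt]
  have hpdf : gaussianPDF 0 (Real.toNNReal v)
      = fun x => ((gaussianPDFReal 0 (Real.toNNReal v) x).toNNReal : ℝ≥0∞) := by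
    funext x; rfl
  rw [hpdf, integral_withDensity_eq_integral_smul
    ((measurable_gaussianPDFReal 0 (Real.toNNReal v)).real_toNNReal) g]
  congr 1
  funext x
  rw [NNReal.smul_def, smul_eq_mul, Real.coe_toNNReal _ (gaussianPDFReal_nonneg _ _ _)]

lemma claim1 {m : ℝ} (hm : 0 < m) {v : ℝ} (hv : 0 < v) :
    ∫ x, max (x - m) 0 ∂(gaussianReal 0 (Real.toNNReal v)) = B m v := by
  have hcoe : ((Real.toNNReal v : ℝ≥0) : ℝ) = v := Real.coe_toNNReal v hv.le
  rw [integral_gaussianReal hv]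
  have hpdfeq : ∀ x : ℝ, gaussianPDFReal 0 (Real.toNNReal v) x
      = (Real.sqrt (2 * π * v))⁻¹ * rexp (-x ^ 2 / (2 * v)) := by
    intro x
    rw [gaussianPDFReal]
    rw [hcoe, sub_zero]
  have hind : (fun x : ℝ => gaussianPDFReal 0 (Real.toNNReal v) x * max (x - m) 0)
      = Set.indicator (Ioi m) (fun x : ℝ =>
          (Real.sqrt (2 * π * v))⁻¹ * (x * rexp (-x ^ 2 / (2 * v))
            - m * rexp (-x ^ 2 / (2 * v)))) := by
    funext x
    by_cases hx : m < x
    · have hx' : x ∈ Ioi m := hx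
      rw [Set.indicator_of_mem hx', hpdfeq]
      rw [max_eq_left (by linarith)]
      ring
    · have hx' : x ∉ Ioi m := hx
      rw [Set.indicator_of_notMem hx', hpdfeq]
      rw [max_eq_right (by push_neg at hx; linarith)]
      ring
  rw [hind, integral_indicator measurableSet_Ioi]
  rw [integral_const_mul]
  rw [integral_sub (integrableOn_x_exp_sq hv hm.le) ((integrableOn_exp_sq hv m).const_mul m)]
  rw [integral_const_mul, calc1 hv hm.le, gtail_comp hv m]
  rw [B]
  have h2πv : Real.sqrt (2 * π * v) = Real.sqrt (2 * π) * Real.sqrt v :=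
    Real.sqrt_mul (by positivity) v
  rw [h2πv]
  have hsv : Real.sqrt v ≠ 0 := (Real.sqrt_pos.mpr hv).ne'
  have h2π : Real.sqrt (2 * π) ≠ 0 := by positivity
  field_simp
  rw [show rexp (-(m ^ 2 / (2 * v))) = rexp (-m ^ 2 / (2 * v)) by rw [neg_div]]
  linear_combination (-rexp (-m ^ 2 / (2 * v))) *
    Real.sq_sqrt hv.le

lemma integrable_of_gaussian {Ω : Type*} [MeasureSpace Ω] [IsProbabilityMeasure (ℙ : Measure Ω)]
    {X : Ω → ℝ} (hX : Measurable X) {v : ℝ≥0} (hv : v ≠ 0)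
    (h : Measure.map X ℙ = gaussianReal 0 v) : Integrable X ℙ := by
  have hvpos : (0:ℝ) < (v:ℝ) := by positivity
  have hid : Integrable (fun x : ℝ => x) (gaussianReal 0 v) := by
    rw [gaussianReal_of_var_ne_zero 0 hv]
    rw [integrable_withDensity_iff (measurable_gaussianPDF 0 v)
      (ae_of_all _ fun x => ENNReal.ofReal_lt_top)]
    have heq : (fun x : ℝ => x * (gaussianPDF 0 v x).toReal)
        = fun x : ℝ => (Real.sqrt (2 * π * v))⁻¹ * (x * rexp (-(2 * (v:ℝ))⁻¹ * x ^ 2)) := by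
      funext x
      rw [gaussianPDF, ENNReal.toReal_ofReal (gaussianPDFReal_nonneg _ _ _), gaussianPDFReal]
      rw [sub_zero]
      ring_nf
    rw [heq]
    apply Integrable.const_mul
    have hint := integrable_rpow_mul_exp_neg_mul_sq (b := (2 * (v:ℝ))⁻¹) (by positivity)
      (s := 1) (by norm_num)
    simpa [Real.rpow_one] using hint
  have := (integrable_map_measure stronglyMeasurable_id.aestronglyMeasurable
    hX.aemeasurable).mp (by rw [h]; exact hid)
  simpa [Function.comp] using this

/-! ### The probability computations -/

section Key
variable {Ω : Type*} [MeasureSpace Ω] [IsProbabilityMeasure (ℙ : Measure Ω)]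
    (G ξ : Ω → ℝ) (hG : Measurable G) (hξ : Measurable ξ)
    (a b c : ℝ) (ha : 0 < a) (hb : 0 < b) (hc : |c| < Real.sqrt (a * b))
    (hlaw : ∀ u v : ℝ, Measure.map (fun ω => u * G ω + v * ξ ω) ℙ =
      gaussianReal 0 (Real.toNNReal (u ^ 2 * a + 2 * u * v * c + v ^ 2 * b)))

include hG hξ ha hb hc hlaw in
lemma numerator_eq {m : ℝ} (hm : 0 < m) :
    ∫ ω in {ω | m < G ω + ξ ω}, ξ ω
      = (b + c) * rexp (-m ^ 2 / (2 * (a + b + 2 * c))) / Real.sqrt (2 * π * (a + b + 2 * c)) := by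
  have hc2 : c ^ 2 < a * b := by
    have h1 : |c| ^ 2 < Real.sqrt (a * b) ^ 2 :=
      pow_lt_pow_left₀ hc (abs_nonneg c) (by norm_num)
    rwa [sq_abs, Real.sq_sqrt (by positivity)] at h1
  have hq : ∀ u : ℝ, 0 < a + 2 * (1 + u) * c + (1 + u) ^ 2 * b := by
    intro u
    nlinarith [sq_nonneg ((1 + u) * b + c), hb, hc2]
  have hs : 0 < a + b + 2 * c := by nlinarith [hq 0]
  have hsne : Real.toNNReal (a + b + 2 * c) ≠ 0 := by
    simp only [ne_eq, Real.toNNReal_eq_zero, not_le]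
    exact hs
  have hMlaw : Measure.map (fun ω => G ω + ξ ω) ℙ
      = gaussianReal 0 (Real.toNNReal (a + b + 2 * c)) := by
    have h := hlaw 1 1
    simp only [one_pow, one_mul, mul_one] at h
    rw [show a + 2 * c + b = a + b + 2 * c from by ring] at h
    exact h
  have hblaw : Measure.map ξ ℙ = gaussianReal 0 (Real.toNNReal b) := by
    have h := hlaw 0 1
    simp only [zero_mul, one_mul, zero_add, mul_zero, mul_one, one_pow] at h
    rw [show (0:ℝ) ^ 2 * a + 0 + b = b from by norm_num] at h
    exact h
  have hMint : Integrable (fun ω => G ω + ξ ω) ℙ :=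
    integrable_of_gaussian (hG.add hξ) hsne hMlaw
  have hξint : Integrable ξ ℙ := integrable_of_gaussian hξ
    (by simp only [ne_eq, Real.toNNReal_eq_zero, not_le]; exact hb) hblaw
  have hset : MeasurableSet {ω | m < G ω + ξ ω} := measurableSet_lt measurable_const (hG.add hξ)
  have hnull : ℙ {ω | G ω + ξ ω = m} = 0 := by
    have h1 : {ω | G ω + ξ ω = m} = (fun ω => G ω + ξ ω) ⁻¹' {m} := rfl
    rw [h1, ← Measure.map_apply (show Measurable fun ω => G ω + ξ ω from hG.add hξ) (measurableSet_singleton m), hMlaw]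
    exact gaussianReal_absolutelyContinuous 0 hsne (measure_singleton m)
  have hae : ∀ᵐ ω ∂ℙ, G ω + ξ ω ≠ m := by
    rw [ae_iff]
    convert hnull using 2
    simp [not_not]
  have hmeasF : ∀ u : ℝ, Measurable (fun ω => max (G ω + (1 + u) * ξ ω - m) 0) := fun u =>
    (((hG.add (hξ.const_mul (1 + u))).sub measurable_const).max measurable_const)
  have hderiv_main :
      Integrable (Set.indicator {ω | m < G ω + ξ ω} ξ) ℙ ∧
      HasDerivAt (fun u => ∫ ω, max (G ω + (1 + u) * ξ ω - m) 0 ∂ℙ)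
        (∫ ω, Set.indicator {ω | m < G ω + ξ ω} ξ ω ∂ℙ) 0 := by
    apply hasDerivAt_integral_of_dominated_loc_of_lip (bound := fun ω => |ξ ω|)
      (s := Metric.ball 0 1) (Metric.ball_mem_nhds 0 one_pos)
    · exact Eventually.of_forall fun u => (hmeasF u).aestronglyMeasurable
    · apply Integrable.mono (hMint.abs.add (integrable_const |m|))
        (hmeasF 0).aestronglyMeasurable
      filter_upwards with ω
      rw [Real.norm_eq_abs, Real.norm_eq_abs]
      have h1 : |max (G ω + (1 + 0) * ξ ω - m) 0| ≤ |G ω + (1 + 0) * ξ ω - m| := by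
        simpa using abs_max_sub_max_le_abs (G ω + (1 + 0) * ξ ω - m) 0 0
      have h2 : |G ω + (1 + 0) * ξ ω - m| ≤ |G ω + ξ ω| + |m| := by
        rw [show G ω + (1 + 0) * ξ ω - m = (G ω + ξ ω) - m from by ring]
        exact abs_sub (G ω + ξ ω) m
      calc |max (G ω + (1 + 0) * ξ ω - m) 0| ≤ |G ω + ξ ω| + |m| := le_trans h1 h2
        _ ≤ _ := le_abs_self _
    · exact (hξ.indicator hset).aestronglyMeasurable
    · filter_upwards with ω
      apply LipschitzWith.lipschitzOnWith
      apply LipschitzWith.of_dist_le_mul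
      intro u u'
      rw [Real.dist_eq, Real.dist_eq]
      have h1 : |max (G ω + (1 + u) * ξ ω - m) 0 - max (G ω + (1 + u') * ξ ω - m) 0|
          ≤ |(G ω + (1 + u) * ξ ω - m) - (G ω + (1 + u') * ξ ω - m)| :=
        abs_max_sub_max_le_abs _ _ _
      calc |max (G ω + (1 + u) * ξ ω - m) 0 - max (G ω + (1 + u') * ξ ω - m) 0|
          ≤ |(u - u') * ξ ω| := by
            rw [show (G ω + (1 + u) * ξ ω - m) - (G ω + (1 + u') * ξ ω - m)
              = (u - u') * ξ ω from by ring] at h1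
            exact h1
        _ = |ξ ω| * |u - u'| := by rw [abs_mul]; ring
        _ ≤ (Real.nnabs |ξ ω| : ℝ) * |u - u'| := by
            rw [Real.coe_nnabs, abs_abs]
    · exact hξint.abs
    · filter_upwards [hae] with ω hω
      rcases lt_or_gt_of_ne hω with hlt | hgt
      · have hmem : ω ∉ {ω | m < G ω + ξ ω} := by
          simp only [mem_setOf_eq, not_lt]
          linarith
        rw [Set.indicator_of_notMem hmem]
        have hcont : Continuous fun u : ℝ => G ω + (1 + u) * ξ ω - m := by continuity
        have hev : ∀ᶠ u in nhds (0:ℝ), G ω + (1 + u) * ξ ω - m < 0 := by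
          have ht : Tendsto (fun u : ℝ => G ω + (1 + u) * ξ ω - m) (nhds 0)
              (nhds (G ω + (1 + 0) * ξ ω - m)) := hcont.tendsto 0
          apply ht.eventually_lt_const
          simp only [add_zero]
          linarith [hlt]
        apply (hasDerivAt_const (0:ℝ) (0:ℝ)).congr_of_eventuallyEq
        filter_upwards [hev] with u hu
        exact max_eq_right hu.le
      · have hmem : ω ∈ {ω | m < G ω + ξ ω} := hgt
        rw [Set.indicator_of_mem hmem]
        have hlin : HasDerivAt (fun u : ℝ => (G ω + ξ ω - m) + u * ξ ω) (ξ ω) 0 := by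
          simpa using ((hasDerivAt_id (0:ℝ)).mul_const (ξ ω)).const_add (G ω + ξ ω - m)
        apply hlin.congr_of_eventuallyEq
        have hcont : Continuous fun u : ℝ => G ω + (1 + u) * ξ ω - m := by continuity
        have hev : ∀ᶠ u in nhds (0:ℝ), 0 < G ω + (1 + u) * ξ ω - m := by
          have ht : Tendsto (fun u : ℝ => G ω + (1 + u) * ξ ω - m) (nhds 0)
              (nhds (G ω + (1 + 0) * ξ ω - m)) := hcont.tendsto 0
          apply ht.eventually_const_lt
          simp only [add_zero]
          linarith [hgt]
        filter_upwards [hev] with u hu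
        rw [max_eq_left hu.le]
        ring
  obtain ⟨hF'int, hderiv⟩ := hderiv_main
  have hrep : (fun u : ℝ => ∫ ω, max (G ω + (1 + u) * ξ ω - m) 0 ∂ℙ)
      = fun u : ℝ => B m (a + 2 * (1 + u) * c + (1 + u) ^ 2 * b) := by
    funext u
    have hmap : Measure.map (fun ω => G ω + (1 + u) * ξ ω) ℙ
        = gaussianReal 0 (Real.toNNReal (a + 2 * (1 + u) * c + (1 + u) ^ 2 * b)) := by
      have h := hlaw 1 (1 + u)
      simp only [one_pow, one_mul, mul_one] at h
      exact h
    have hcont : Continuous fun x : ℝ => max (x - m) 0 :=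
      (continuous_id.sub continuous_const).max continuous_const
    have hmapint := integral_map (μ := ℙ) (φ := fun ω => G ω + (1 + u) * ξ ω)
      (hG.add (hξ.const_mul (1 + u))).aemeasurable
      (f := fun x : ℝ => max (x - m) 0) hcont.aestronglyMeasurable
    rw [hmap] at hmapint
    calc ∫ ω, max (G ω + (1 + u) * ξ ω - m) 0 ∂ℙ
        = ∫ x, max (x - m) 0
            ∂(gaussianReal 0 (Real.toNNReal (a + 2 * (1 + u) * c + (1 + u) ^ 2 * b))) :=
          hmapint.symm
      _ = B m (a + 2 * (1 + u) * c + (1 + u) ^ 2 * b) := claim1 hm (hq u)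
  rw [hrep] at hderiv
  -- derivative of the explicit parametric function
  have hqd : HasDerivAt (fun u : ℝ => a + 2 * (1 + u) * c + (1 + u) ^ 2 * b) (2 * c + 2 * b) 0 := by
    have h1 : HasDerivAt (fun u : ℝ => 1 + u) 1 0 := by
      simpa using (hasDerivAt_id (0:ℝ)).const_add 1
    have h2 : HasDerivAt (fun u : ℝ => 2 * (1 + u) * c) (2 * c) 0 := by
      have := (h1.const_mul 2).mul_const c
      refine this.congr_deriv ?_
      norm_num
    have h3 : HasDerivAt (fun u : ℝ => (1 + u) ^ 2 * b) (2 * b) 0 := by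
      have := (h1.pow 2).mul_const b
      refine this.congr_deriv ?_
      norm_num
    have := (h2.const_add a).add h3
    exact this
  have hB' : HasDerivAt (B m)
      (rexp (-m ^ 2 / (2 * (a + b + 2 * c))) /
        (2 * Real.sqrt (a + b + 2 * c) * Real.sqrt (2 * π)))
      (a + 2 * (1 + (0:ℝ)) * c + (1 + (0:ℝ)) ^ 2 * b) := by
    rw [show a + 2 * (1 + (0:ℝ)) * c + (1 + (0:ℝ)) ^ 2 * b = a + b + 2 * c from by ring]
    exact hasDerivAt_B m hs
  have hcomp := hB'.comp 0 hqd
  have hcomp' : HasDerivAt (fun u : ℝ => B m (a + 2 * (1 + u) * c + (1 + u) ^ 2 * b))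
      (rexp (-m ^ 2 / (2 * (a + b + 2 * c))) /
        (2 * Real.sqrt (a + b + 2 * c) * Real.sqrt (2 * π)) * (2 * c + 2 * b)) 0 := by
    exact hcomp
  have hval : ∫ ω, Set.indicator {ω | m < G ω + ξ ω} ξ ω ∂ℙ
      = rexp (-m ^ 2 / (2 * (a + b + 2 * c))) /
        (2 * Real.sqrt (a + b + 2 * c) * Real.sqrt (2 * π)) * (2 * c + 2 * b) :=
    hderiv.unique hcomp'
  rw [← integral_indicator hset, hval]
  rw [Real.sqrt_mul (by positivity : (0:ℝ) ≤ 2 * π) (a + b + 2 * c)]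
  have hss : Real.sqrt (a + b + 2 * c) ≠ 0 := (Real.sqrt_pos.mpr hs).ne'
  have h2π : Real.sqrt (2 * π) ≠ 0 := by positivity
  field_simp
  ring

include hG hξ ha hb hc hlaw in
lemma prob_eq (m : ℝ) :
    (ℙ {ω | m < G ω + ξ ω}).toReal
      = (Real.sqrt (2 * π * (a + b + 2 * c)))⁻¹
        * ∫ x in Ioi m, rexp (-x ^ 2 / (2 * (a + b + 2 * c))) := by
  have hc2 : c ^ 2 < a * b := by
    have h1 : |c| ^ 2 < Real.sqrt (a * b) ^ 2 :=
      pow_lt_pow_left₀ hc (abs_nonneg c) (by norm_num)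
    rwa [sq_abs, Real.sq_sqrt (by positivity)] at h1
  have hs : 0 < a + b + 2 * c := by nlinarith [sq_nonneg (a - b), hc2]
  have hsne : Real.toNNReal (a + b + 2 * c) ≠ 0 := by
    simp only [ne_eq, Real.toNNReal_eq_zero, not_le]
    exact hs
  have hMlaw : Measure.map (fun ω => G ω + ξ ω) ℙ
      = gaussianReal 0 (Real.toNNReal (a + b + 2 * c)) := by
    have h := hlaw 1 1
    simp only [one_pow, one_mul, mul_one] at h
    rw [show a + 2 * c + b = a + b + 2 * c from by ring] at h
    exact h
  have h1 : {ω | m < G ω + ξ ω} = (fun ω => G ω + ξ ω) ⁻¹' (Ioi m) := rfl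
  rw [h1, ← Measure.map_apply (show Measurable fun ω => G ω + ξ ω from hG.add hξ) measurableSet_Ioi, hMlaw,
    gaussianReal_apply_eq_integral 0 hsne (Ioi m)]
  rw [ENNReal.toReal_ofReal
    (setIntegral_nonneg measurableSet_Ioi fun x _ => gaussianPDFReal_nonneg _ _ _)]
  have hpdfeq : ∀ x : ℝ, gaussianPDFReal 0 (Real.toNNReal (a + b + 2 * c)) x
      = (Real.sqrt (2 * π * (a + b + 2 * c)))⁻¹ * rexp (-x ^ 2 / (2 * (a + b + 2 * c))) := by
    intro x
    rw [gaussianPDFReal, Real.coe_toNNReal _ hs.le, sub_zero]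
  rw [setIntegral_congr_fun measurableSet_Ioi (fun x _ => hpdfeq x)]
  rw [integral_const_mul]

end Key
end GaussAux

/-- Conditionally on `{M > m}`, `E[ξ | M > m] ~ ((b+c)/(a+b+2c)) m` as `m → ∞`. -/
theorem gaussian_condExp_discrepancy_equiv {Ω : Type*} [MeasureSpace Ω] [IsProbabilityMeasure (ℙ : Measure Ω)]
    (G ξ : Ω → ℝ) (hG : Measurable G) (hξ : Measurable ξ)
    (a b c : ℝ) (ha : 0 < a) (hb : 0 < b) (hc : |c| < Real.sqrt (a * b))
    (hlaw : ∀ u v : ℝ, Measure.map (fun ω => u * G ω + v * ξ ω) ℙ =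
      gaussianReal 0 (Real.toNNReal (u ^ 2 * a + 2 * u * v * c + v ^ 2 * b))) (hbc : 0 < b + c) :
    (fun m : ℝ => condExpEvent ξ {ω | m < G ω + ξ ω})
      ~[atTop] (fun m : ℝ => (b + c) / (a + b + 2 * c) * m) := by
  have hc2 : c ^ 2 < a * b := by
    have h1 : |c| ^ 2 < Real.sqrt (a * b) ^ 2 :=
      pow_lt_pow_left₀ hc (abs_nonneg c) (by norm_num)
    rwa [sq_abs, Real.sq_sqrt (by positivity)] at h1
  have hs : 0 < a + b + 2 * c := by nlinarith [sq_nonneg (a - b), hc2]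
  apply Asymptotics.isEquivalent_of_tendsto_one
  · apply Filter.Tendsto.congr' _ (GaussAux.mills_tendsto hs)
    filter_upwards [eventually_gt_atTop (0:ℝ)] with m hm
    have hN := GaussAux.numerator_eq G ξ hG hξ a b c ha hb hc hlaw hm
    have hP := GaussAux.prob_eq G ξ hG hξ a b c ha hb hc hlaw m
    have htail := GaussAux.tail_pos hs hm
    have hsq2π : Real.sqrt (2 * π * (a + b + 2 * c)) ≠ 0 := by positivity
    simp only [Pi.div_apply]
    rw [condExpEvent, hN, hP]
    field_simp
end

section
/- Fix η > 0, b > 2, and nonnegative integers l, s. Then as m → ∞, ∫_0^{m/(b+1)} f_{Q'}^{N+1}(P_l)(g) · exp(Q(g)) dg = o(m^{-((N+1)b - l + s - 1)}), where Q(g) = -g((m-g)/η)^{b-1}, P_l(g) = g^l/(m-g)^s, and f_{Q'} denotes dividing by Q' and differentiating, iterated N+1 times. -/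
open Filter Asymptotics MeasureTheory Real Set

namespace RemainderAux

structure Tm where
  c : ℝ
  i : ℕ
  α : ℝ
  t : ℕ

noncomputable def tval (b m : ℝ) (T : Tm) (g : ℝ) : ℝ :=
  T.c * g ^ T.i * (m - g) ^ T.α * (b * g - m) ^ (-(T.t : ℤ))

noncomputable def sval (b m : ℝ) (L : List Tm) (g : ℝ) : ℝ :=
  (L.map (fun T => tval b m T g)).sum

def dterm (b : ℝ) (T : Tm) : List Tm :=
  [⟨T.c * T.i, T.i - 1, T.α, T.t⟩,
   ⟨-(T.c * T.α), T.i, T.α - 1, T.t⟩,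
   ⟨-(T.c * b * T.t), T.i, T.α, T.t + 1⟩]

def dlist (b : ℝ) : List Tm → List Tm
  | [] => []
  | T :: L => dterm b T ++ dlist b L

noncomputable def mulT (b η : ℝ) (T : Tm) : Tm := ⟨T.c * η ^ (b - 1), T.i, T.α - (b - 2), T.t + 1⟩

/-- one step of the transformation on lists -/
noncomputable def stepL (b η : ℝ) (L : List Tm) : List Tm := dlist b (L.map (mulT b η))

def deg (T : Tm) : ℝ := (T.i : ℝ) + T.α - (T.t : ℝ)

def good (d : ℝ) (L : List Tm) : Prop := ∀ T ∈ L, T.c = 0 ∨ deg T ≤ d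

lemma sval_cons (b m : ℝ) (T : Tm) (L : List Tm) (g : ℝ) :
    sval b m (T :: L) g = tval b m T g + sval b m L g := by
  simp [sval]

lemma sval_nil (b m g : ℝ) : sval b m [] g = 0 := by simp [sval]

lemma sval_append (b m : ℝ) (L₁ L₂ : List Tm) (g : ℝ) :
    sval b m (L₁ ++ L₂) g = sval b m L₁ g + sval b m L₂ g := by
  simp [sval]

lemma hasDerivAt_tval (b m : ℝ) (T : Tm) (g : ℝ) (h1 : 0 < m - g) (h2 : b * g - m ≠ 0) :
    HasDerivAt (tval b m T) (sval b m (dterm b T) g) g := by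
  have hA : HasDerivAt (fun x : ℝ => T.c * x ^ T.i) (T.c * ((T.i : ℝ) * g ^ (T.i - 1))) g :=
    (hasDerivAt_pow T.i g).const_mul T.c
  have hmg : HasDerivAt (fun x : ℝ => m - x) (-1) g := (hasDerivAt_id g).const_sub m
  have hB : HasDerivAt (fun x : ℝ => (m - x) ^ T.α)
      (T.α * (m - g) ^ (T.α - 1) * (-1)) g := by
    exact (Real.hasDerivAt_rpow_const (p := T.α) (Or.inl h1.ne')).comp g hmg
  have hbg : HasDerivAt (fun x : ℝ => b * x - m) b g := by
    simpa using ((hasDerivAt_id g).const_mul b).sub_const m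
  have hC : HasDerivAt (fun x : ℝ => (b * x - m) ^ (-(T.t : ℤ)))
      (((-(T.t : ℤ)) : ℝ) * (b * g - m) ^ (-(T.t : ℤ) - 1) * b) g := by
    have := (hasDerivAt_zpow (-(T.t : ℤ)) _ (Or.inl h2)).comp g hbg
    exact this.congr_deriv (by simp)
  have := ((hA.mul hB).mul hC)
  refine this.congr_deriv ?_
  simp only [sval, dterm, tval, List.map, List.sum_cons, List.sum_nil, Pi.mul_apply]
  have hcast : (-(((T.t : ℕ) + 1 : ℕ) : ℤ)) = -(T.t : ℤ) - 1 := by push_cast; ring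
  rw [hcast]
  push_cast
  ring

lemma hasDerivAt_sval (b m : ℝ) (L : List Tm) (g : ℝ) (h1 : 0 < m - g) (h2 : b * g - m ≠ 0) :
    HasDerivAt (sval b m L) (sval b m (dlist b L) g) g := by
  induction L with
  | nil =>
    simp only [dlist, sval_nil]
    exact (hasDerivAt_const g (0:ℝ)).congr_of_eventuallyEq (Filter.Eventually.of_forall fun x => sval_nil b m x)
  | cons T L ih =>
    have : HasDerivAt (fun x => tval b m T x + sval b m L x)
        (sval b m (dterm b T) g + sval b m (dlist b L) g) g :=
      (hasDerivAt_tval b m T g h1 h2).add ih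
    simp only [dlist, sval_append]
    exact this.congr_of_eventuallyEq (by filter_upwards with x; rw [sval_cons])


lemma good_dlist {b d : ℝ} {L : List Tm} (h : good d L) : good (d - 1) (dlist b L) := by
  induction L with
  | nil => simp [dlist, good]
  | cons T L ih =>
    have hT := h T List.mem_cons_self
    have hL : good d L := fun S hS => h S (List.mem_cons_of_mem _ hS)
    intro S hS
    simp only [dlist, List.mem_append] at hS
    rcases hS with hS | hS
    · simp only [dterm, List.mem_cons, List.not_mem_nil, or_false] at hS
      rcases hS with rfl | rfl | rfl
      · rcases hT with hc | hd
        · exact Or.inl (by simp [hc])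
        · rcases Nat.eq_zero_or_pos T.i with hi | hi
          · exact Or.inl (by simp [hi])
          · refine Or.inr ?_
            have : ((T.i - 1 : ℕ) : ℝ) = (T.i : ℝ) - 1 := by
              rw [Nat.cast_sub hi]; simp
            simp only [deg, this]
            simp only [deg] at hd
            linarith
      · rcases hT with hc | hd
        · exact Or.inl (by simp [hc])
        · by_cases hα : T.α = 0
          · exact Or.inl (by simp [hα])
          · refine Or.inr ?_
            simp only [deg] at hd ⊢
            linarith
      · rcases hT with hc | hd
        · exact Or.inl (by simp [hc])
        · rcases Nat.eq_zero_or_pos T.t with ht | ht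
          · exact Or.inl (by simp [ht])
          · refine Or.inr ?_
            simp only [deg] at hd ⊢
            push_cast
            linarith
    · exact ih hL S hS

lemma good_mulL {b η d : ℝ} {L : List Tm} (h : good d L) :
    good (d + (1 - b)) (L.map (mulT b η)) := by
  intro S hS
  simp only [List.mem_map] at hS
  obtain ⟨T, hT, rfl⟩ := hS
  rcases h T hT with hc | hd
  · exact Or.inl (by simp [mulT, hc])
  · refine Or.inr ?_
    simp only [mulT, deg] at hd ⊢
    push_cast
    linarith

lemma good_stepL {b η d : ℝ} {L : List Tm} (h : good d L) :
    good (d - b) (stepL b η L) := by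
  have := good_dlist (b := b) (good_mulL (b := b) (η := η) h)
  have he : d + (1 - b) - 1 = d - b := by ring
  rwa [he] at this

/-- evaluation of the multiplication step -/
lemma tval_mulT (b η m : ℝ) (hη : 0 < η) (T : Tm) (g : ℝ)
    (h1 : 0 < m - g) (h2 : b * g - m ≠ 0) :
    tval b m (mulT b η T) g =
      tval b m T g / ((m - g) ^ (b - 2) * (b * g - m) / η ^ (b - 1)) := by
  have hrp : (m - g) ^ (T.α - (b - 2)) = (m - g) ^ T.α / (m - g) ^ (b - 2) :=
    Real.rpow_sub h1 _ _
  have hz : (b * g - m) ^ (-(((T.t : ℕ) + 1 : ℕ) : ℤ))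
      = (b * g - m) ^ (-(T.t : ℤ)) * (b * g - m)⁻¹ := by
    have : (-(((T.t : ℕ) + 1 : ℕ) : ℤ)) = -(T.t : ℤ) + (-1) := by push_cast; ring
    rw [this, zpow_add₀ h2]
    simp
  have hb2 : (0:ℝ) < (m - g) ^ (b - 2) := Real.rpow_pos_of_pos h1 _
  have hη2 : (0:ℝ) < η ^ (b - 1) := Real.rpow_pos_of_pos hη _
  simp only [tval, mulT, hrp, hz]
  field_simp

lemma sval_mulL (b η m : ℝ) (hη : 0 < η) (L : List Tm) (g : ℝ)
    (h1 : 0 < m - g) (h2 : b * g - m ≠ 0) :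
    sval b m (L.map (mulT b η)) g =
      sval b m L g / ((m - g) ^ (b - 2) * (b * g - m) / η ^ (b - 1)) := by
  induction L with
  | nil => simp [sval]
  | cons T L ih =>
    simp only [List.map_cons, sval_cons, ih, tval_mulT b η m hη T g h1 h2, add_div]


/-- The derivative of `Q(y) = -y ((m-y)/η)^(b-1)` at points where `m - x > 0`. -/
lemma deriv_Q (b η m : ℝ) (hη : 0 < η) (x : ℝ) (h1 : 0 < m - x) :
    deriv (fun y => -y * ((m - y) / η) ^ (b - 1)) x
      = (m - x) ^ (b - 2) * (b * x - m) / η ^ (b - 1) := by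
  have hE : 0 < (m - x) / η := div_pos h1 hη
  have hmg : HasDerivAt (fun y : ℝ => (m - y) / η) (-(1/η)) x := by
    have : HasDerivAt (fun y : ℝ => m - y) (-1) x := (hasDerivAt_id x).const_sub m
    simpa [neg_div] using this.div_const η
  have hpow : HasDerivAt (fun y : ℝ => ((m - y) / η) ^ (b - 1))
      ((b - 1) * ((m - x) / η) ^ (b - 1 - 1) * (-(1/η))) x :=
    by exact (Real.hasDerivAt_rpow_const (p := b - 1) (Or.inl hE.ne')).comp x hmg
  have hneg : HasDerivAt (fun y : ℝ => -y) (-1) x := (hasDerivAt_id x).neg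
  have hQ : HasDerivAt (fun y => -y * ((m - y) / η) ^ (b - 1))
      ((-1) * ((m - x) / η) ^ (b - 1) + (-x) * ((b - 1) * ((m - x) / η) ^ (b - 1 - 1) * (-(1/η)))) x :=
    hneg.mul hpow
  rw [hQ.deriv]
  have e1 : ((m - x) / η) ^ (b - 1) = (m - x) ^ (b - 1) / η ^ (b - 1) :=
    Real.div_rpow h1.le hη.le _
  have e2 : ((m - x) / η) ^ (b - 1 - 1) = (m - x) ^ (b - 2) / η ^ (b - 2) := by
    rw [show b - 1 - 1 = b - 2 by ring, Real.div_rpow h1.le hη.le _]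
  have e3 : (m - x) ^ (b - 1) = (m - x) ^ (b - 2) * (m - x) := by
    rw [← Real.rpow_add_one h1.ne' (b - 2)]; ring_nf
  have e4 : η ^ (b - 1) = η ^ (b - 2) * η := by
    rw [← Real.rpow_add_one hη.ne' (b - 2)]; ring_nf
  rw [e1, e2, e3, e4]
  have hη2 : (0:ℝ) < η ^ (b - 2) := Real.rpow_pos_of_pos hη _
  field_simp
  ring


lemma iterate_eq (η b : ℝ) (hη : 0 < η) (hb1 : 1 < b) (l s : ℕ) (m : ℝ) (hm : 0 < m) (k : ℕ) :
    ∀ g ∈ Ioo (-1 : ℝ) (m / b),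
      ((fun P : ℝ → ℝ =>
          deriv (fun x => P x / deriv (fun y => -y * ((m - y) / η) ^ (b - 1)) x))^[k]
        (fun x => x ^ l / (m - x) ^ s)) g
        = sval b m ((stepL b η)^[k] [⟨1, l, -(s : ℝ), 0⟩]) g := by
  have hb0 : (0:ℝ) < b := lt_trans one_pos hb1
  have hU1 : ∀ g ∈ Ioo (-1 : ℝ) (m / b), 0 < m - g := by
    intro g hg
    have : g < m / b := hg.2
    have h2 : m / b < m := div_lt_self hm hb1
    linarith
  have hU2 : ∀ g ∈ Ioo (-1 : ℝ) (m / b), b * g - m ≠ 0 := by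
    intro g hg
    have : g < m / b := hg.2
    have : g * b < m := (lt_div_iff₀ hb0).mp this
    linarith
  induction k with
  | zero =>
    intro g hg
    have h1 := hU1 g hg
    simp only [Function.iterate_zero, id_eq, sval, tval, List.map, List.sum_cons,
      List.sum_nil]
    rw [Real.rpow_neg h1.le, Real.rpow_natCast]
    simp [div_eq_mul_inv]
  | succ k ih =>
    intro g hg
    rw [Function.iterate_succ_apply', Function.iterate_succ_apply']
    set Lk := (stepL b η)^[k] [(⟨1, l, -(s : ℝ), 0⟩ : Tm)] with hLk
    have hopen : Ioo (-1 : ℝ) (m / b) ∈ nhds g := isOpen_Ioo.mem_nhds hg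
    have heq : (fun x => ((fun P : ℝ → ℝ =>
          deriv (fun x => P x / deriv (fun y => -y * ((m - y) / η) ^ (b - 1)) x))^[k]
            (fun x => x ^ l / (m - x) ^ s)) x
              / deriv (fun y => -y * ((m - y) / η) ^ (b - 1)) x)
        =ᶠ[nhds g] sval b m (Lk.map (mulT b η)) := by
      filter_upwards [hopen] with x hx
      rw [ih x hx, deriv_Q b η m hη x (hU1 x hx),
        sval_mulL b η m hη Lk x (hU1 x hx) (hU2 x hx)]
    rw [heq.deriv_eq]
    exact (hasDerivAt_sval b m (Lk.map (mulT b η)) g (hU1 g hg) (hU2 g hg)).deriv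


lemma tval_bound (b : ℝ) (hb : 2 < b) (T : Tm) (d : ℝ) (hT : T.c = 0 ∨ deg T ≤ d) :
    ∃ C : ℝ, 0 ≤ C ∧ ∀ m : ℝ, 1 ≤ m → ∀ g ∈ Ioc (0:ℝ) (m / (b + 1)),
      |tval b m T g| ≤ C * m ^ d := by
  rcases hT with hc | hd
  · exact ⟨0, le_refl 0, fun m hm g hg => by simp [tval, hc]⟩
  refine ⟨|T.c| * max 1 ((2/3 : ℝ) ^ T.α) * (b + 1) ^ T.t, by positivity, ?_⟩
  intro m hm g hg
  have hm0 : (0:ℝ) < m := lt_of_lt_of_le one_pos hm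
  have hb1 : (0:ℝ) < b + 1 := by linarith
  have hg0 : 0 < g := hg.1
  have hgT : g ≤ m / (b + 1) := hg.2
  have hgm : g ≤ m := le_trans hgT (by
    rw [div_le_iff₀ hb1]; nlinarith)
  have h23 : (2/3 : ℝ) * m ≤ m - g := by
    have h := (le_div_iff₀ hb1).mp hgT
    nlinarith
  have hmg0 : 0 < m - g := lt_of_lt_of_le (by positivity) h23
  have hbg : m / (b + 1) ≤ m - b * g := by
    rw [div_le_iff₀ hb1]
    have h := (le_div_iff₀ hb1).mp hgT
    nlinarith
  have hbg0 : 0 < m - b * g := lt_of_lt_of_le (by positivity) hbg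
  -- bound each factor
  have f1 : g ^ T.i ≤ m ^ T.i := pow_le_pow_left₀ hg0.le hgm T.i
  have f2 : (m - g) ^ T.α ≤ max 1 ((2/3 : ℝ) ^ T.α) * m ^ T.α := by
    rcases le_or_gt 0 T.α with hα | hα
    · calc (m - g) ^ T.α ≤ m ^ T.α :=
            Real.rpow_le_rpow hmg0.le (by linarith) hα
        _ ≤ max 1 ((2/3 : ℝ) ^ T.α) * m ^ T.α := by
            nlinarith [Real.rpow_nonneg hm0.le T.α, le_max_left (1:ℝ) ((2/3 : ℝ) ^ T.α)]
    · have h0 : (m - g) ^ T.α ≤ ((2/3 : ℝ) * m) ^ T.α :=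
        Real.rpow_le_rpow_of_nonpos (by positivity) h23 hα.le
      calc (m - g) ^ T.α ≤ ((2/3 : ℝ) * m) ^ T.α := h0
        _ = (2/3 : ℝ) ^ T.α * m ^ T.α := Real.mul_rpow (by norm_num) hm0.le
        _ ≤ max 1 ((2/3 : ℝ) ^ T.α) * m ^ T.α := by
            nlinarith [Real.rpow_nonneg hm0.le T.α,
              le_max_right (1:ℝ) ((2/3 : ℝ) ^ T.α)]
  have f3 : |(b * g - m) ^ (-(T.t : ℤ))| ≤ (b + 1) ^ T.t / m ^ T.t := by
    rw [zpow_neg, zpow_natCast, abs_inv, abs_pow]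
    have habs : |b * g - m| = m - b * g := by
      rw [abs_of_neg (by linarith)]; ring
    rw [habs]
    have h1 : (m / (b + 1)) ^ T.t ≤ (m - b * g) ^ T.t :=
      pow_le_pow_left₀ (by positivity) hbg T.t
    calc ((m - b * g) ^ T.t)⁻¹ ≤ ((m / (b + 1)) ^ T.t)⁻¹ := by
          apply inv_anti₀ (by positivity) h1
      _ = (b + 1) ^ T.t / m ^ T.t := by
          rw [div_pow, inv_div]
  -- combine
  have hknown : |tval b m T g|
      = |T.c| * g ^ T.i * (m - g) ^ T.α * |(b * g - m) ^ (-(T.t : ℤ))| := by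
    simp only [tval, abs_mul]
    rw [abs_of_nonneg (pow_nonneg hg0.le _), abs_of_nonneg (Real.rpow_nonneg hmg0.le _)]
  rw [hknown]
  have key : |T.c| * g ^ T.i * (m - g) ^ T.α * |(b * g - m) ^ (-(T.t : ℤ))|
      ≤ |T.c| * m ^ T.i * (max 1 ((2/3 : ℝ) ^ T.α) * m ^ T.α) * ((b + 1) ^ T.t / m ^ T.t) := by
    have n3 : (0:ℝ) ≤ (m - g) ^ T.α := Real.rpow_nonneg hmg0.le _
    gcongr
  refine key.trans ?_
  have hexp : m ^ T.i * m ^ T.α / m ^ T.t = m ^ ((T.i : ℝ) + T.α - (T.t : ℝ)) := by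
    rw [← Real.rpow_natCast m T.i, ← Real.rpow_natCast m T.t, ← Real.rpow_add hm0,
      ← Real.rpow_sub hm0]
  have hmon : m ^ ((T.i : ℝ) + T.α - (T.t : ℝ)) ≤ m ^ d :=
    Real.rpow_le_rpow_of_exponent_le hm hd
  calc |T.c| * m ^ T.i * (max 1 ((2/3 : ℝ) ^ T.α) * m ^ T.α) * ((b + 1) ^ T.t / m ^ T.t)
      = |T.c| * max 1 ((2/3 : ℝ) ^ T.α) * (b + 1) ^ T.t
          * (m ^ T.i * m ^ T.α / m ^ T.t) := by ring
    _ = |T.c| * max 1 ((2/3 : ℝ) ^ T.α) * (b + 1) ^ T.t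
          * m ^ ((T.i : ℝ) + T.α - (T.t : ℝ)) := by rw [hexp]
    _ ≤ |T.c| * max 1 ((2/3 : ℝ) ^ T.α) * (b + 1) ^ T.t * m ^ d := by
          apply mul_le_mul_of_nonneg_left hmon (by positivity)


lemma sval_bound (b : ℝ) (hb : 2 < b) (L : List Tm) (d : ℝ) (hL : good d L) :
    ∃ C : ℝ, 0 ≤ C ∧ ∀ m : ℝ, 1 ≤ m → ∀ g ∈ Ioc (0:ℝ) (m / (b + 1)),
      |sval b m L g| ≤ C * m ^ d := by
  induction L with
  | nil => exact ⟨0, le_refl 0, fun m hm g hg => by simp [sval]⟩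
  | cons T L ih =>
    obtain ⟨CT, hCT, hT⟩ := tval_bound b hb T d (hL T List.mem_cons_self)
    obtain ⟨CL, hCL, hLb⟩ := ih (fun S hS => hL S (List.mem_cons_of_mem _ hS))
    refine ⟨CT + CL, by positivity, fun m hm g hg => ?_⟩
    rw [sval_cons]
    calc |tval b m T g + sval b m L g| ≤ |tval b m T g| + |sval b m L g| := abs_add_le _ _
      _ ≤ CT * m ^ d + CL * m ^ d := add_le_add (hT m hm g hg) (hLb m hm g hg)
      _ = (CT + CL) * m ^ d := by ring

/-- degree bookkeeping for the iterated list -/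
lemma good_iter (b η : ℝ) (l s : ℕ) (k : ℕ) :
    good ((l : ℝ) - (s : ℝ) - k * b) ((stepL b η)^[k] [⟨1, l, -(s : ℝ), 0⟩]) := by
  induction k with
  | zero =>
    intro T hT
    simp only [Function.iterate_zero, id_eq, List.mem_cons, List.not_mem_nil, or_false] at hT
    subst hT
    right
    simp [deg]
  | succ k ih =>
    rw [Function.iterate_succ_apply']
    have := good_stepL (b := b) (η := η) ih
    have he : (l : ℝ) - (s : ℝ) - k * b - b = (l : ℝ) - (s : ℝ) - (k + 1 : ℕ) * b := by
      push_cast; ring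
    rwa [he] at this

end RemainderAux


/-- Remainder bound in the iterated integration-by-parts expansion: with
`Q(g) = -g((m-g)/η)^{b-1}`, `P_l(g) = g^l/(m-g)^s`, and `f_{Q'}` the operation of dividing
by `Q'` and differentiating, iterated `N+1` times,
`∫_0^{m/(b+1)} f_{Q'}^{N+1}(P_l)(g) exp(Q(g)) dg = o(m^{-((N+1)b - l + s - 1)})` as `m → ∞`. -/
theorem remainder_integral_isLittleO (η : ℝ) (hη : 0 < η) (b : ℝ) (hb : 2 < b)
    (l s N : ℕ) :
    (fun m : ℝ =>
        ∫ g in Set.Ioc (0 : ℝ) (m / (b + 1)),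
          ((fun P : ℝ → ℝ =>
              deriv (fun x => P x / deriv (fun y => -y * ((m - y) / η) ^ (b - 1)) x))^[N + 1]
            (fun x => x ^ l / (m - x) ^ s)) g *
          Real.exp (-g * ((m - g) / η) ^ (b - 1)))
      =o[atTop]
        (fun m : ℝ => m ^ (-(((N : ℝ) + 1) * b - (l : ℝ) + (s : ℝ) - 1))) := by
  have hb0 : (0:ℝ) < b := by linarith
  have hb1 : (1:ℝ) < b := by linarith
  have hbp1 : (0:ℝ) < b + 1 := by linarith
  obtain ⟨C, hC, hCb⟩ := RemainderAux.sval_bound b hb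
    ((RemainderAux.stepL b η)^[N+1] [(⟨1, l, -(s:ℝ), 0⟩ : RemainderAux.Tm)])
    _ (RemainderAux.good_iter b η l s (N+1))
  set c0 : ℝ := (2/(3*η)) ^ (b-1) with hc0def
  have hc0 : 0 < c0 := Real.rpow_pos_of_pos (by positivity) _
  set E : ℝ := -(((N : ℝ) + 1) * b - (l : ℝ) + (s : ℝ) - 1) with hEdef
  set D : ℝ := (l : ℝ) - (s : ℝ) - ((N+1 : ℕ) : ℝ) * b with hDdef
  have hDE : D + -(b-1) = E - b := by rw [hDdef, hEdef]; push_cast; ring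
  have key : ∀ m : ℝ, 1 ≤ m →
      ‖∫ g in Set.Ioc (0 : ℝ) (m / (b + 1)),
          ((fun P : ℝ → ℝ =>
              deriv (fun x => P x / deriv (fun y => -y * ((m - y) / η) ^ (b - 1)) x))^[N + 1]
            (fun x => x ^ l / (m - x) ^ s)) g *
          Real.exp (-g * ((m - g) / η) ^ (b - 1))‖
        ≤ (C * c0⁻¹) * m ^ (E - b) := by
    intro m hm
    have hm0 : (0:ℝ) < m := lt_of_lt_of_le one_pos hm
    set lam : ℝ := c0 * m ^ (b - 1) with hlamdef
    have hlam : 0 < lam := by positivity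
    have hsub : Set.Ioc (0:ℝ) (m / (b + 1)) ⊆ Set.Ioo (-1 : ℝ) (m / b) := by
      intro g hg
      constructor
      · linarith [hg.1]
      · calc g ≤ m / (b + 1) := hg.2
          _ < m / b := by
            apply div_lt_div_of_pos_left hm0 hb0 (by linarith)
    have hbound : ∀ g ∈ Set.Ioc (0:ℝ) (m / (b + 1)),
        ‖((fun P : ℝ → ℝ =>
              deriv (fun x => P x / deriv (fun y => -y * ((m - y) / η) ^ (b - 1)) x))^[N + 1]
            (fun x => x ^ l / (m - x) ^ s)) g *
          Real.exp (-g * ((m - g) / η) ^ (b - 1))‖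
          ≤ C * m ^ D * Real.exp (-lam * g) := by
      intro g hg
      have hg0 : 0 < g := hg.1
      have hgT : g ≤ m / (b + 1) := hg.2
      have h23 : (2/3 : ℝ) * m ≤ m - g := by
        have h := (le_div_iff₀ hbp1).mp hgT
        nlinarith
      have hmg0 : 0 < m - g := lt_of_lt_of_le (by positivity) h23
      rw [RemainderAux.iterate_eq η b hη hb1 l s m hm0 (N+1) g (hsub hg)]
      rw [norm_mul, Real.norm_eq_abs, Real.norm_eq_abs, Real.abs_exp]
      have h1 := hCb m hm g hg
      have h2 : Real.exp (-g * ((m - g) / η) ^ (b - 1)) ≤ Real.exp (-lam * g) := by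
        rw [Real.exp_le_exp]
        have hcm : lam ≤ ((m - g) / η) ^ (b - 1) := by
          rw [hlamdef, hc0def, ← Real.mul_rpow (by positivity) hm0.le]
          apply Real.rpow_le_rpow (by positivity) _ (by linarith)
          rw [le_div_iff₀ hη]
          have he : 2 / (3 * η) * m * η = 2 / 3 * m := by field_simp
          rw [he]
          exact h23
        nlinarith [hcm, hg0]
      calc |RemainderAux.sval b m _ g| * Real.exp (-g * ((m - g) / η) ^ (b - 1))
          ≤ (C * m ^ D) * Real.exp (-lam * g) := by
            apply mul_le_mul h1 h2 (Real.exp_pos _).le (by positivity)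
        _ = C * m ^ D * Real.exp (-lam * g) := by ring
    have hint : IntegrableOn (fun g : ℝ => C * m ^ D * Real.exp (-lam * g))
        (Set.Ioc (0:ℝ) (m / (b + 1))) :=
      ((exp_neg_integrableOn_Ioi 0 hlam).mono_set Set.Ioc_subset_Ioi_self).const_mul _
    have h1 : ‖∫ g in Set.Ioc (0 : ℝ) (m / (b + 1)),
          ((fun P : ℝ → ℝ =>
              deriv (fun x => P x / deriv (fun y => -y * ((m - y) / η) ^ (b - 1)) x))^[N + 1]
            (fun x => x ^ l / (m - x) ^ s)) g *
          Real.exp (-g * ((m - g) / η) ^ (b - 1))‖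
        ≤ ∫ g in Set.Ioc (0:ℝ) (m / (b + 1)), C * m ^ D * Real.exp (-lam * g) :=
      norm_integral_le_of_norm_le hint
        ((ae_restrict_iff' measurableSet_Ioc).2 (Filter.Eventually.of_forall hbound))
    have h2 : (∫ g in Set.Ioc (0:ℝ) (m / (b + 1)), C * m ^ D * Real.exp (-lam * g))
        = C * m ^ D * ∫ g in Set.Ioc (0:ℝ) (m / (b + 1)), Real.exp (-lam * g) :=
      integral_const_mul _ _
    have h3 : (∫ g in Set.Ioc (0:ℝ) (m / (b + 1)), Real.exp (-lam * g))
        ≤ ∫ g in Set.Ioi (0:ℝ), Real.exp (-lam * g) := by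
      apply setIntegral_mono_set (exp_neg_integrableOn_Ioi 0 hlam)
        (Filter.Eventually.of_forall fun x => (Real.exp_pos _).le)
        (Filter.Eventually.of_forall fun x hx => Set.Ioc_subset_Ioi_self hx)
    have h4 : (∫ g in Set.Ioi (0:ℝ), Real.exp (-lam * g)) = lam⁻¹ := by
      have := MeasureTheory.integral_comp_mul_left_Ioi (fun y => Real.exp (-y)) 0 hlam
      simp only [mul_zero, smul_eq_mul] at this
      rw [show (fun g : ℝ => Real.exp (-lam * g)) = fun x : ℝ => Real.exp (-(lam * x)) by
        funext x; ring_nf, this, integral_exp_neg_Ioi_zero, mul_one]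
    have h5 : C * m ^ D * lam⁻¹ = (C * c0⁻¹) * m ^ (E - b) := by
      rw [hlamdef, mul_inv, ← Real.rpow_neg hm0.le, ← hDE, Real.rpow_add hm0]
      ring
    calc ‖_‖ ≤ _ := h1
      _ = C * m ^ D * ∫ g in Set.Ioc (0:ℝ) (m / (b + 1)), Real.exp (-lam * g) := h2
      _ ≤ C * m ^ D * ∫ g in Set.Ioi (0:ℝ), Real.exp (-lam * g) :=
          mul_le_mul_of_nonneg_left h3 (by positivity)
      _ = C * m ^ D * lam⁻¹ := by rw [h4]
      _ = (C * c0⁻¹) * m ^ (E - b) := h5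
  have hO : (fun m : ℝ =>
        ∫ g in Set.Ioc (0 : ℝ) (m / (b + 1)),
          ((fun P : ℝ → ℝ =>
              deriv (fun x => P x / deriv (fun y => -y * ((m - y) / η) ^ (b - 1)) x))^[N + 1]
            (fun x => x ^ l / (m - x) ^ s)) g *
          Real.exp (-g * ((m - g) / η) ^ (b - 1)))
      =O[atTop] (fun m : ℝ => m ^ (E - b)) := by
    rw [isBigO_iff]
    refine ⟨C * c0⁻¹, ?_⟩
    filter_upwards [eventually_ge_atTop (1:ℝ)] with m hm
    have hm0 : (0:ℝ) < m := lt_of_lt_of_le one_pos hm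
    calc ‖_‖ ≤ (C * c0⁻¹) * m ^ (E - b) := key m hm
      _ = (C * c0⁻¹) * ‖m ^ (E - b)‖ := by
          rw [Real.norm_eq_abs, abs_of_nonneg (Real.rpow_nonneg hm0.le _)]
  have ho : (fun m : ℝ => m ^ (E - b)) =o[atTop] (fun m : ℝ => m ^ E) := by
    rw [isLittleO_iff]
    intro c hc
    filter_upwards [eventually_ge_atTop (1:ℝ),
      (tendsto_rpow_neg_atTop hb0).eventually_le_const hc] with m hm hmc
    have hm0 : (0:ℝ) < m := lt_of_lt_of_le one_pos hm
    rw [Real.norm_eq_abs, Real.norm_eq_abs, abs_of_nonneg (Real.rpow_nonneg hm0.le _),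
      abs_of_nonneg (Real.rpow_nonneg hm0.le _)]
    calc m ^ (E - b) = m ^ E * m ^ (-b) := by
          rw [← Real.rpow_add hm0]; ring_nf
      _ ≤ m ^ E * c := by
          apply mul_le_mul_of_nonneg_left hmc (Real.rpow_nonneg hm0.le _)
      _ = c * m ^ E := by ring
  exact hO.trans_isLittleO ho
end
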